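/- arXiv:1607.02801 — 9 statements merged into one kernel-verified Lean document; each statement's English description precedes it below -/
import Mathlib

section
/- Let d = min_{i≠j} d(i,j) and let S_d = {(i,j) : i ≠ j, d(i,j) = d}. Then lim_{σ²→0⁺} P̄_e(σ²)/(σ²)^d = g, where g = Σ_{(i,j)∈S_d} √(p_i p_j)·2^{r_{ij}/2}·( √(v_i v_j) / v_{ij} )^{1/2}; equivalently, P̄_e(σ²) = g·(σ²)^d + o((σ²)^d) as σ² → 0⁺. (Paper's Lemma 1.) -/
open Matrix Filter Topology
open scoped Classical

/-- The Bhattacharyya exponent `K_{ij}(σ²)` for zero-mean Gaussian classes with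
covariances `A`, `B`, measurement matrix `Φ` and noise variance `s = σ²`. -/
noncomputable def Kexp {M N : ℕ} (Φ : Matrix (Fin M) (Fin N) ℝ)
    (A B : Matrix (Fin N) (Fin N) ℝ) (s : ℝ) : ℝ :=
  (1 / 4) * Real.log
    ((((1 : ℝ) / 2) • (Φ * (A + B) * Φᵀ + (2 * s) • (1 : Matrix (Fin M) (Fin M) ℝ))).det ^ 2 /
      ((Φ * A * Φᵀ + s • (1 : Matrix (Fin M) (Fin M) ℝ)).det *
        (Φ * B * Φᵀ + s • (1 : Matrix (Fin M) (Fin M) ℝ)).det))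

/-- The union–Bhattacharyya upper bound `P̄_e(σ²)` on the misclassification probability. -/
noncomputable def Pbar {M N L : ℕ} (Φ : Matrix (Fin M) (Fin N) ℝ)
    (S : Fin L → Matrix (Fin N) (Fin N) ℝ) (p : Fin L → ℝ) (s : ℝ) : ℝ :=
  ∑ i, ∑ j ∈ Finset.univ.filter (fun j => j ≠ i),
    Real.sqrt (p i * p j) * Real.exp (-Kexp Φ (S i) (S j) s)

/-- The pairwise low-noise decay exponent `d(i,j) = (2 r_{ij} - r_i - r_j)/4`. -/
noncomputable def dExp {M N : ℕ} (Φ : Matrix (Fin M) (Fin N) ℝ)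
    (A B : Matrix (Fin N) (Fin N) ℝ) : ℝ :=
  (2 * ((Φ * (A + B) * Φᵀ).rank : ℝ) - (Φ * A * Φᵀ).rank - (Φ * B * Φᵀ).rank) / 4

/-- Pseudo-determinant of a symmetric matrix: product of its nonzero eigenvalues
(equal to `1` for the zero matrix). -/
noncomputable def pdet {n : ℕ} (S : Matrix (Fin n) (Fin n) ℝ) : ℝ :=
  if h : S.IsHermitian then
    ∏ k, if h.eigenvalues k = 0 then 1 else h.eigenvalues k
  else 0

section Helpers

lemma det_add_smul_one {m : ℕ} {Q : Matrix (Fin m) (Fin m) ℝ} (hQ : Q.IsHermitian) (s : ℝ) :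
    (Q + s • (1 : Matrix (Fin m) (Fin m) ℝ)).det = ∏ k, (hQ.eigenvalues k + s) := by
  set U : Matrix (Fin m) (Fin m) ℝ := (hQ.eigenvectorUnitary : Matrix (Fin m) (Fin m) ℝ) with hUdef
  have hU : U * star U = 1 := (Matrix.mem_unitaryGroup_iff).mp hQ.eigenvectorUnitary.2
  have hU' : star U * U = 1 := (Matrix.mem_unitaryGroup_iff').mp hQ.eigenvectorUnitary.2
  have hrw : Q + s • (1 : Matrix (Fin m) (Fin m) ℝ)
      = U * (diagonal (RCLike.ofReal ∘ hQ.eigenvalues) + s • 1) * star U := by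
    rw [Matrix.mul_add, Matrix.add_mul]
    congr 1
    · exact hQ.spectral_theorem
    · rw [Matrix.mul_smul, Matrix.mul_one, Matrix.smul_mul, hU]
  rw [hrw, det_mul, det_mul, mul_comm, ← mul_assoc, ← det_mul, hU', det_one, one_mul,
    Matrix.smul_one_eq_diagonal, diagonal_add, det_diagonal]
  simp [RCLike.ofReal]

lemma det_add_pos {m : ℕ} {Q : Matrix (Fin m) (Fin m) ℝ} (hQ : Q.PosSemidef) {s : ℝ}
    (hs : 0 < s) : 0 < (Q + s • (1 : Matrix (Fin m) (Fin m) ℝ)).det := by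
  rw [det_add_smul_one hQ.isHermitian s]
  exact Finset.prod_pos fun k _ => add_pos_of_nonneg_of_pos (hQ.eigenvalues_nonneg k) hs

lemma pdet_eq {m : ℕ} {Q : Matrix (Fin m) (Fin m) ℝ} (hQ : Q.IsHermitian) :
    pdet Q = ∏ k ∈ Finset.univ.filter (fun k => hQ.eigenvalues k ≠ 0), hQ.eigenvalues k := by
  rw [pdet, dif_pos hQ, Finset.prod_filter]
  congr 1; ext k
  by_cases h : hQ.eigenvalues k = 0 <;> simp [h]

lemma pdet_pos {m : ℕ} {Q : Matrix (Fin m) (Fin m) ℝ} (hQ : Q.PosSemidef) : 0 < pdet Q := by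
  rw [pdet_eq hQ.isHermitian]
  apply Finset.prod_pos
  intro k hk
  simp only [Finset.mem_filter] at hk
  exact lt_of_le_of_ne (hQ.eigenvalues_nonneg k) (Ne.symm hk.2)

lemma rank_card {m : ℕ} {Q : Matrix (Fin m) (Fin m) ℝ} (hQ : Q.IsHermitian) :
    ((m : ℝ) - Q.rank) = ((Finset.univ.filter (fun k => hQ.eigenvalues k = 0)).card : ℝ) := by
  have h1 : Q.rank = (Finset.univ.filter (fun k => hQ.eigenvalues k ≠ 0)).card := by
    rw [hQ.rank_eq_card_non_zero_eigs, Fintype.card_subtype]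
  have h2 : (Finset.univ.filter (fun k => hQ.eigenvalues k = 0)).card
      + (Finset.univ.filter (fun k => hQ.eigenvalues k ≠ 0)).card = m := by
    rw [Finset.card_filter_add_card_filter_not]
    simp
  rw [h1]
  have := congrArg (fun n : ℕ => (n : ℝ)) h2
  push_cast at this ⊢
  linarith

lemma key_tendsto {m : ℕ} {Q : Matrix (Fin m) (Fin m) ℝ} (hQ : Q.PosSemidef) :
    Tendsto (fun s : ℝ => (Q + s • (1 : Matrix (Fin m) (Fin m) ℝ)).det / s ^ ((m : ℝ) - Q.rank))
      (𝓝[>] (0 : ℝ)) (𝓝 (pdet Q)) := by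
  have hH := hQ.isHermitian
  have hcont : Tendsto (fun s : ℝ => ∏ k ∈ Finset.univ.filter (fun k => hH.eigenvalues k ≠ 0),
      (hH.eigenvalues k + s)) (𝓝[>] (0 : ℝ)) (𝓝 (pdet Q)) := by
    rw [pdet_eq hH]
    have : Tendsto (fun s : ℝ => ∏ k ∈ Finset.univ.filter (fun k => hH.eigenvalues k ≠ 0),
        (hH.eigenvalues k + s)) (𝓝 (0 : ℝ))
        (𝓝 (∏ k ∈ Finset.univ.filter (fun k => hH.eigenvalues k ≠ 0), hH.eigenvalues k)) := by
      apply tendsto_finset_prod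
      intro k _
      have : Continuous (fun s : ℝ => hH.eigenvalues k + s) := by continuity
      simpa using this.tendsto 0
    exact this.mono_left nhdsWithin_le_nhds
  apply hcont.congr'
  filter_upwards [self_mem_nhdsWithin] with s hs
  have hs' : (0 : ℝ) < s := hs
  rw [det_add_smul_one hH s]
  have hsplit : ∏ k, (hH.eigenvalues k + s)
      = (∏ k ∈ Finset.univ.filter (fun k => hH.eigenvalues k = 0), s)
        * ∏ k ∈ Finset.univ.filter (fun k => ¬ (hH.eigenvalues k = 0)), (hH.eigenvalues k + s) := by
    rw [← Finset.prod_filter_mul_prod_filter_not Finset.univ (fun k => hH.eigenvalues k = 0)]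
    congr 1
    apply Finset.prod_congr rfl
    intro k hk
    simp only [Finset.mem_filter] at hk
    rw [hk.2, zero_add]
  rw [hsplit, Finset.prod_const, rank_card hH, Real.rpow_natCast]
  field_simp

lemma two_smul_tendsto : Tendsto (fun s : ℝ => 2 * s) (𝓝[>] (0 : ℝ)) (𝓝[>] (0 : ℝ)) := by
  rw [tendsto_nhdsWithin_iff]
  constructor
  · have : Tendsto (fun s : ℝ => 2 * s) (𝓝 (0 : ℝ)) (𝓝 (2 * 0 : ℝ)) :=
      (continuous_const.mul continuous_id).tendsto 0
    simpa using this.mono_left nhdsWithin_le_nhds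
  · filter_upwards [self_mem_nhdsWithin] with s hs
    have : (0:ℝ) < s := hs
    simp only [Set.mem_Ioi]
    linarith

end Helpers
section Pair

variable {N M : ℕ}

lemma pair_tendsto (Φ : Matrix (Fin M) (Fin N) ℝ) (A B : Matrix (Fin N) (Fin N) ℝ)
    (hA : A.PosSemidef) (hB : B.PosSemidef) (d : ℝ) (hd : d ≤ dExp Φ A B) :
    Tendsto (fun s : ℝ => Real.exp (-Kexp Φ A B s) / s ^ d) (𝓝[>] (0 : ℝ))
      (𝓝 (if dExp Φ A B = d then
        (2 : ℝ) ^ (((Φ * (A + B) * Φᵀ).rank : ℝ) / 2) *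
          Real.sqrt (Real.sqrt (pdet (Φ * A * Φᵀ) * pdet (Φ * B * Φᵀ)) /
            pdet (Φ * (A + B) * Φᵀ))
      else 0)) := by
  have hP1 : (Φ * A * Φᵀ).PosSemidef := by
    have := hA.mul_mul_conjTranspose_same Φ
    rwa [conjTranspose_eq_transpose_of_trivial] at this
  have hP2 : (Φ * B * Φᵀ).PosSemidef := by
    have := hB.mul_mul_conjTranspose_same Φ
    rwa [conjTranspose_eq_transpose_of_trivial] at this
  have hP3 : (Φ * (A + B) * Φᵀ).PosSemidef := by
    have := (hA.add hB).mul_mul_conjTranspose_same Φ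
    rwa [conjTranspose_eq_transpose_of_trivial] at this
  set P₁ := Φ * A * Φᵀ
  set P₂ := Φ * B * Φᵀ
  set P₃ := Φ * (A + B) * Φᵀ
  set e₁ : ℝ := (M : ℝ) - P₁.rank with he₁
  set e₂ : ℝ := (M : ℝ) - P₂.rank with he₂
  set e₃ : ℝ := (M : ℝ) - P₃.rank with he₃
  set v₁ := pdet P₁
  set v₂ := pdet P₂
  set v₃ := pdet P₃
  have hv₁ : 0 < v₁ := pdet_pos hP1
  have hv₂ : 0 < v₂ := pdet_pos hP2
  have hv₃ : 0 < v₃ := pdet_pos hP3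
  set c : ℝ := dExp Φ A B with hc
  -- limits of the three determinant ratios
  have hT1 := key_tendsto hP1
  have hT2 := key_tendsto hP2
  have hT3 := (key_tendsto hP3).comp two_smul_tendsto
  -- the scaled third one
  set w₃ : ℝ := ((1:ℝ)/2)^M * ((2:ℝ) ^ e₃ * v₃) with hw₃
  have hw₃pos : 0 < w₃ := by positivity
  have hTX : Tendsto (fun s : ℝ =>
      ((1:ℝ)/2)^M * (P₃ + (2 * s) • (1 : Matrix (Fin M) (Fin M) ℝ)).det / s ^ e₃)
      (𝓝[>] (0:ℝ)) (𝓝 w₃) := by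
    have h := hT3.const_mul (((1:ℝ)/2)^M * (2:ℝ) ^ e₃)
    rw [hw₃]
    have : ((1:ℝ)/2)^M * (2:ℝ) ^ e₃ * v₃ = ((1:ℝ)/2)^M * ((2:ℝ) ^ e₃ * v₃) := by ring
    rw [← this]
    apply h.congr'
    filter_upwards [self_mem_nhdsWithin] with s hs
    have hs' : (0:ℝ) < s := hs
    have h2s : ((2:ℝ) * s) ^ e₃ = (2:ℝ) ^ e₃ * s ^ e₃ :=
      Real.mul_rpow (by norm_num) hs'.le
    simp only [Function.comp]
    rw [h2s]
    have hse : (0:ℝ) < s ^ e₃ := Real.rpow_pos_of_pos hs' _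
    field_simp
  -- last factor
  have hlast : Tendsto (fun s : ℝ => s ^ (c - d)) (𝓝[>] (0:ℝ))
      (𝓝 (if c = d then 1 else 0)) := by
    by_cases hcd : c = d
    · simp only [hcd, sub_self, if_pos rfl]
      apply Tendsto.congr' (f₁ := fun _ => (1:ℝ))
      · filter_upwards with s
        rw [Real.rpow_zero]
      · exact tendsto_const_nhds
    · have hpos : 0 < c - d := sub_pos.mpr (lt_of_le_of_ne hd (Ne.symm hcd))
      simp only [if_neg hcd]
      have : Tendsto (fun s : ℝ => s ^ (c - d)) (𝓝 (0:ℝ)) (𝓝 ((0:ℝ) ^ (c - d))) :=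
        (Real.continuousAt_rpow_const 0 (c - d) (Or.inr hpos.le)).tendsto
      rw [Real.zero_rpow hpos.ne'] at this
      exact this.mono_left nhdsWithin_le_nhds
  -- the combined limit
  have hG : Tendsto (fun s : ℝ =>
      ((P₁ + s • (1 : Matrix (Fin M) (Fin M) ℝ)).det / s ^ e₁) ^ (4⁻¹ : ℝ) *
      ((P₂ + s • (1 : Matrix (Fin M) (Fin M) ℝ)).det / s ^ e₂) ^ (4⁻¹ : ℝ) *
      (((1:ℝ)/2)^M * (P₃ + (2 * s) • (1 : Matrix (Fin M) (Fin M) ℝ)).det / s ^ e₃) ^ (-(2⁻¹ : ℝ)) *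
      s ^ (c - d)) (𝓝[>] (0:ℝ))
      (𝓝 (v₁ ^ (4⁻¹:ℝ) * v₂ ^ (4⁻¹:ℝ) * w₃ ^ (-(2⁻¹:ℝ)) * (if c = d then 1 else 0))) := by
    exact (((hT1.rpow_const (Or.inl hv₁.ne')).mul
      (hT2.rpow_const (Or.inl hv₂.ne'))).mul
      (hTX.rpow_const (Or.inl hw₃pos.ne'))).mul hlast
  -- eventual equality with the target function
  have heq : (fun s : ℝ => Real.exp (-Kexp Φ A B s) / s ^ d) =ᶠ[𝓝[>] (0:ℝ)]
      (fun s : ℝ =>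
      ((P₁ + s • (1 : Matrix (Fin M) (Fin M) ℝ)).det / s ^ e₁) ^ (4⁻¹ : ℝ) *
      ((P₂ + s • (1 : Matrix (Fin M) (Fin M) ℝ)).det / s ^ e₂) ^ (4⁻¹ : ℝ) *
      (((1:ℝ)/2)^M * (P₃ + (2 * s) • (1 : Matrix (Fin M) (Fin M) ℝ)).det / s ^ e₃) ^ (-(2⁻¹ : ℝ)) *
      s ^ (c - d)) := by
    filter_upwards [self_mem_nhdsWithin] with s hs
    have hs' : (0:ℝ) < s := hs
    set Y := (P₁ + s • (1 : Matrix (Fin M) (Fin M) ℝ)).det with hY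
    set Z := (P₂ + s • (1 : Matrix (Fin M) (Fin M) ℝ)).det with hZ
    set X := ((1:ℝ)/2)^M * (P₃ + (2 * s) • (1 : Matrix (Fin M) (Fin M) ℝ)).det with hX
    have hYpos : 0 < Y := det_add_pos hP1 hs'
    have hZpos : 0 < Z := det_add_pos hP2 hs'
    have hXpos : 0 < X := by
      have := det_add_pos hP3 (by linarith : (0:ℝ) < 2 * s)
      positivity
    -- exp(-K) in closed form
    have hexp : Real.exp (-Kexp Φ A B s) = Y ^ (4⁻¹:ℝ) * Z ^ (4⁻¹:ℝ) * X ^ (-(2⁻¹:ℝ)) := by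
      have hKval : -Kexp Φ A B s =
          Real.log Y * 4⁻¹ + Real.log Z * 4⁻¹ + Real.log X * (-(2⁻¹)) := by
        have hdet : (((1 : ℝ) / 2) • (Φ * (A + B) * Φᵀ +
            (2 * s) • (1 : Matrix (Fin M) (Fin M) ℝ))).det = X := by
          rw [hX, Matrix.det_smul]
          simp [P₃]
        rw [Kexp, hdet]
        rw [Real.log_div (by positivity) (by positivity), Real.log_pow,
          Real.log_mul hYpos.ne' hZpos.ne']
        push_cast
        ring
      rw [hKval, Real.exp_add, Real.exp_add,
        ← Real.rpow_def_of_pos hYpos, ← Real.rpow_def_of_pos hZpos,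
        ← Real.rpow_def_of_pos hXpos]
    -- the power bookkeeping
    have hkey : ∀ (x e z : ℝ), 0 ≤ x → (x / s ^ e) ^ z = x ^ z * s ^ (-(e * z)) := by
      intro x e z hx
      rw [Real.div_rpow hx (Real.rpow_nonneg hs'.le e), ← Real.rpow_mul hs'.le,
        div_eq_mul_inv, ← Real.rpow_neg hs'.le]
    rw [hexp, hkey Y e₁ _ hYpos.le, hkey Z e₂ _ hZpos.le, hkey X e₃ _ hXpos.le]
    have hcollect : s ^ (-(e₁ * 4⁻¹)) * s ^ (-(e₂ * 4⁻¹)) * s ^ (-(e₃ * -(2⁻¹))) * s ^ (c - d)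
        = s ^ (-d) := by
      rw [← Real.rpow_add hs', ← Real.rpow_add hs', ← Real.rpow_add hs']
      congr 1
      rw [hc, dExp, he₁, he₂, he₃]
      ring
    calc Y ^ (4⁻¹:ℝ) * Z ^ (4⁻¹:ℝ) * X ^ (-(2⁻¹:ℝ)) / s ^ d
        = Y ^ (4⁻¹:ℝ) * Z ^ (4⁻¹:ℝ) * X ^ (-(2⁻¹:ℝ)) * s ^ (-d) := by
          rw [Real.rpow_neg hs'.le, div_eq_mul_inv]
      _ = (Y ^ (4⁻¹:ℝ) * Z ^ (4⁻¹:ℝ) * X ^ (-(2⁻¹:ℝ))) *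
          (s ^ (-(e₁ * 4⁻¹)) * s ^ (-(e₂ * 4⁻¹)) * s ^ (-(e₃ * -(2⁻¹))) * s ^ (c - d)) := by
          rw [hcollect]
      _ = Y ^ (4⁻¹:ℝ) * s ^ (-(e₁ * 4⁻¹)) * (Z ^ (4⁻¹:ℝ) * s ^ (-(e₂ * 4⁻¹))) *
          (X ^ (-(2⁻¹:ℝ)) * s ^ (-(e₃ * -(2⁻¹)))) * s ^ (c - d) := by ring
  -- identify the limit value
  have hval : v₁ ^ (4⁻¹:ℝ) * v₂ ^ (4⁻¹:ℝ) * w₃ ^ (-(2⁻¹:ℝ)) * (if c = d then 1 else 0)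
      = (if c = d then
        (2 : ℝ) ^ ((P₃.rank : ℝ) / 2) *
          Real.sqrt (Real.sqrt (v₁ * v₂) / v₃)
      else 0) := by
    by_cases hcd : c = d
    · simp only [if_pos hcd, mul_one]
      have hw : w₃ = (2:ℝ) ^ (-(P₃.rank : ℝ)) * v₃ := by
        rw [hw₃]
        have h2M : ((1:ℝ)/2)^M = (2:ℝ) ^ (-(M:ℝ)) := by
          rw [Real.rpow_neg (by norm_num), Real.rpow_natCast]
          simp [one_div, inv_pow]
        rw [h2M, ← mul_assoc, ← Real.rpow_add (by norm_num), he₃]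
        congr 2
        ring
      rw [hw, Real.mul_rpow (by positivity) hv₃.le, ← Real.rpow_mul (by norm_num)]
      rw [Real.sqrt_eq_rpow, Real.sqrt_eq_rpow, Real.div_rpow (by positivity) hv₃.le,
        ← Real.rpow_mul (by positivity), Real.mul_rpow hv₁.le hv₂.le]
      have hre : (-(P₃.rank : ℝ)) * (-2⁻¹) = (P₃.rank : ℝ) / 2 := by ring
      have hv3e : v₃ ^ (-(2⁻¹:ℝ)) = (v₃ ^ ((1:ℝ)/2))⁻¹ := by
        rw [Real.rpow_neg hv₃.le]
        norm_num
      have h14 : ((1:ℝ)/2) * ((1:ℝ)/2) = (4⁻¹:ℝ) := by norm_num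
      rw [hre, hv3e, h14, div_eq_mul_inv]
      ring
    · simp only [if_neg hcd, mul_zero]
  rw [show (if dExp Φ A B = d then
        (2 : ℝ) ^ (((Φ * (A + B) * Φᵀ).rank : ℝ) / 2) *
          Real.sqrt (Real.sqrt (pdet (Φ * A * Φᵀ) * pdet (Φ * B * Φᵀ)) /
            pdet (Φ * (A + B) * Φᵀ))
      else 0) = v₁ ^ (4⁻¹:ℝ) * v₂ ^ (4⁻¹:ℝ) * w₃ ^ (-(2⁻¹:ℝ)) * (if c = d then 1 else 0)
    from hval.symm]
  exact hG.congr' heq.symm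

end Pair
/-- Paper's Lemma 1. With `d = min_{i≠j} d(i,j)` and
`g = Σ_{(i,j): i≠j, d(i,j)=d} √(p_i p_j)·2^{r_{ij}/2}·(√(v_i v_j)/v_{ij})^{1/2}`,
one has `P̄_e(σ²)/(σ²)^d → g` as `σ² → 0⁺`. -/
theorem stmt0 {N M L : ℕ} (hN : 1 ≤ N) (hM : 1 ≤ M) (hL : 2 ≤ L)
    (Φ : Matrix (Fin M) (Fin N) ℝ) (S : Fin L → Matrix (Fin N) (Fin N) ℝ)
    (hS : ∀ i, (S i).PosSemidef)
    (p : Fin L → ℝ) (hp : ∀ i, 0 < p i) (hpsum : ∑ i, p i = 1)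
    (d : ℝ)
    (hd_le : ∀ i j, i ≠ j → d ≤ dExp Φ (S i) (S j))
    (hd_mem : ∃ i j, i ≠ j ∧ dExp Φ (S i) (S j) = d)
    (g : ℝ)
    (hg : g = ∑ i, ∑ j ∈ Finset.univ.filter (fun j => j ≠ i ∧ dExp Φ (S i) (S j) = d),
      Real.sqrt (p i * p j) * (2 : ℝ) ^ (((Φ * (S i + S j) * Φᵀ).rank : ℝ) / 2) *
        Real.sqrt (Real.sqrt (pdet (Φ * S i * Φᵀ) * pdet (Φ * S j * Φᵀ)) /
          pdet (Φ * (S i + S j) * Φᵀ))) :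
    Tendsto (fun s : ℝ => Pbar Φ S p s / s ^ d) (𝓝[>] (0 : ℝ)) (𝓝 g) := by
  have hglim : g = ∑ i, ∑ j ∈ Finset.univ.filter (fun j => j ≠ i),
      Real.sqrt (p i * p j) * (if dExp Φ (S i) (S j) = d then
        (2 : ℝ) ^ (((Φ * (S i + S j) * Φᵀ).rank : ℝ) / 2) *
          Real.sqrt (Real.sqrt (pdet (Φ * S i * Φᵀ) * pdet (Φ * S j * Φᵀ)) /
            pdet (Φ * (S i + S j) * Φᵀ))
      else 0) := by
    rw [hg]
    apply Finset.sum_congr rfl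
    intro i _
    rw [← Finset.filter_filter, Finset.sum_filter]
    apply Finset.sum_congr rfl
    intro j _
    by_cases h : dExp Φ (S i) (S j) = d <;> simp [h, mul_assoc]
  rw [hglim]
  have hfun : ∀ s : ℝ, Pbar Φ S p s / s ^ d
      = ∑ i, ∑ j ∈ Finset.univ.filter (fun j => j ≠ i),
        Real.sqrt (p i * p j) * (Real.exp (-Kexp Φ (S i) (S j) s) / s ^ d) := by
    intro s
    rw [Pbar, Finset.sum_div]
    apply Finset.sum_congr rfl
    intro i _
    rw [Finset.sum_div]
    apply Finset.sum_congr rfl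
    intro j _
    rw [mul_div_assoc]
  simp only [hfun]
  apply tendsto_finset_sum
  intro i _
  apply tendsto_finset_sum
  intro j hj
  have hji : j ≠ i := by
    simpa using (Finset.mem_filter.mp hj).2
  exact (pair_tendsto Φ (S i) (S j) (hS i) (hS j) d (hd_le i j hji.symm)).const_mul _
end

section
/- If r_i + r_j < 2·r_{ij} for every pair of indices i ≠ j, then lim_{σ²→0⁺} P̄_e(σ²) = 0. (Second part of the paper's Corollary 1.) -/
open Matrix Filter Topology
open scoped Classical

lemma det_add_smul_one_s2 {n : ℕ} {P : Matrix (Fin n) (Fin n) ℝ} (hP : P.IsHermitian) (s : ℝ) :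
    (P + s • (1 : Matrix (Fin n) (Fin n) ℝ)).det = ∏ k, (hP.eigenvalues k + s) := by
  have hU : (hP.eigenvectorUnitary : Matrix (Fin n) (Fin n) ℝ) *
      star (hP.eigenvectorUnitary : Matrix (Fin n) (Fin n) ℝ) = 1 :=
    Matrix.mem_unitaryGroup_iff.mp hP.eigenvectorUnitary.2
  have h1 : P + s • (1 : Matrix (Fin n) (Fin n) ℝ) =
      (hP.eigenvectorUnitary : Matrix (Fin n) (Fin n) ℝ) *
        diagonal (fun k => hP.eigenvalues k + s) *
        star (hP.eigenvectorUnitary : Matrix (Fin n) (Fin n) ℝ) := by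
    have hd : diagonal (fun k => hP.eigenvalues k + s) =
        diagonal (RCLike.ofReal ∘ hP.eigenvalues) + s • (1 : Matrix (Fin n) (Fin n) ℝ) := by
      rw [Matrix.smul_one_eq_diagonal, ← Matrix.diagonal_add]
      congr 1
    rw [hd, Matrix.mul_add, Matrix.add_mul, ← Unitary.conjStarAlgAut_apply (S := ℝ), ← hP.spectral_theorem]
    congr 1
    rw [Matrix.mul_smul, Matrix.mul_one, Matrix.smul_mul, hU]
  rw [h1, Matrix.det_mul_right_comm, hU, one_mul, det_diagonal]

lemma key_tendsto_s2 {M : ℕ} (A B X : Matrix (Fin M) (Fin M) ℝ)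
    (hA : A.PosSemidef) (hB : B.PosSemidef) (hX : X.PosSemidef)
    (hrank : A.rank + B.rank < 2 * X.rank) :
    Tendsto (fun s : ℝ =>
      (((1 : ℝ) / 2) • (X + (2 * s) • (1 : Matrix (Fin M) (Fin M) ℝ))).det ^ 2 /
        ((A + s • (1 : Matrix (Fin M) (Fin M) ℝ)).det *
          (B + s • (1 : Matrix (Fin M) (Fin M) ℝ)).det)) (𝓝[>] (0 : ℝ)) atTop := by
  classical
  set α := hA.1.eigenvalues with hα
  set β := hB.1.eigenvalues with hβ
  set ν := hX.1.eigenvalues with hν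
  set TA := Finset.univ.filter (fun k => ¬ α k = 0) with hTA
  set TB := Finset.univ.filter (fun k => ¬ β k = 0) with hTB
  set TX := Finset.univ.filter (fun k => ¬ ν k = 0) with hTX
  set zA := (Finset.univ.filter (fun k => α k = 0)).card with hzA
  set zB := (Finset.univ.filter (fun k => β k = 0)).card with hzB
  set zX := (Finset.univ.filter (fun k => ν k = 0)).card with hzX
  have hcardA : zA + TA.card = M := by
    simpa using Finset.card_filter_add_card_filter_not (s := Finset.univ)
      (p := fun k => α k = 0)
  have hcardB : zB + TB.card = M := by
    simpa using Finset.card_filter_add_card_filter_not (s := Finset.univ)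
      (p := fun k => β k = 0)
  have hcardX : zX + TX.card = M := by
    simpa using Finset.card_filter_add_card_filter_not (s := Finset.univ)
      (p := fun k => ν k = 0)
  have hrA : A.rank = TA.card := by
    rw [hA.1.rank_eq_card_non_zero_eigs, Fintype.card_subtype]
  have hrB : B.rank = TB.card := by
    rw [hB.1.rank_eq_card_non_zero_eigs, Fintype.card_subtype]
  have hrX : X.rank = TX.card := by
    rw [hX.1.rank_eq_card_non_zero_eigs, Fintype.card_subtype]
  rw [hrA, hrB, hrX] at hrank
  obtain ⟨m, hm0, hzz⟩ : ∃ m, 0 < m ∧ zA + zB = 2 * zX + m := ⟨zA + zB - 2 * zX, by omega, by omega⟩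
  set fA : ℝ → ℝ := fun s => ∏ k ∈ TA, (α k + s) with hfA
  set fB : ℝ → ℝ := fun s => ∏ k ∈ TB, (β k + s) with hfB
  set g : ℝ → ℝ := fun s => ∏ k ∈ TX, (ν k + 2 * s) with hg
  have hdetA : ∀ s : ℝ, (A + s • (1 : Matrix (Fin M) (Fin M) ℝ)).det = s ^ zA * fA s := by
    intro s
    rw [det_add_smul_one_s2 hA.1 s,
      ← Finset.prod_filter_mul_prod_filter_not Finset.univ (fun k => α k = 0)]
    congr 1
    have heq : ∏ k ∈ Finset.univ.filter (fun k => α k = 0), (α k + s)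
        = ∏ _k ∈ Finset.univ.filter (fun k => α k = 0), (s) :=
      Finset.prod_congr rfl (fun k hk => by
        simp only [Finset.mem_filter] at hk
        rw [hk.2, zero_add])
    rw [heq, Finset.prod_const]
  have hdetB : ∀ s : ℝ, (B + s • (1 : Matrix (Fin M) (Fin M) ℝ)).det = s ^ zB * fB s := by
    intro s
    rw [det_add_smul_one_s2 hB.1 s,
      ← Finset.prod_filter_mul_prod_filter_not Finset.univ (fun k => β k = 0)]
    congr 1
    have heq : ∏ k ∈ Finset.univ.filter (fun k => β k = 0), (β k + s)
        = ∏ _k ∈ Finset.univ.filter (fun k => β k = 0), (s) :=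
      Finset.prod_congr rfl (fun k hk => by
        simp only [Finset.mem_filter] at hk
        rw [hk.2, zero_add])
    rw [heq, Finset.prod_const]
  have hdetX : ∀ s : ℝ,
      (((1 : ℝ) / 2) • (X + (2 * s) • (1 : Matrix (Fin M) (Fin M) ℝ))).det
        = ((1 : ℝ) / 2) ^ M * ((2 * s) ^ zX * g s) := by
    intro s
    rw [Matrix.det_smul]
    congr 1
    · simp
    rw [det_add_smul_one_s2 hX.1 (2 * s),
      ← Finset.prod_filter_mul_prod_filter_not Finset.univ (fun k => ν k = 0)]
    congr 1
    have heq : ∏ k ∈ Finset.univ.filter (fun k => ν k = 0), (ν k + 2 * s)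
        = ∏ _k ∈ Finset.univ.filter (fun k => ν k = 0), (2 * s) :=
      Finset.prod_congr rfl (fun k hk => by
        simp only [Finset.mem_filter] at hk
        rw [hk.2, zero_add])
    rw [heq, Finset.prod_const]
  -- positivity of the limit constants
  have hfA0 : 0 < fA 0 := by
    apply Finset.prod_pos
    intro k hk
    simp only [hTA, Finset.mem_filter] at hk
    have := hA.eigenvalues_nonneg k
    rw [add_zero]
    exact lt_of_le_of_ne this (Ne.symm hk.2)
  have hfB0 : 0 < fB 0 := by
    apply Finset.prod_pos
    intro k hk
    simp only [hTB, Finset.mem_filter] at hk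
    have := hB.eigenvalues_nonneg k
    rw [add_zero]
    exact lt_of_le_of_ne this (Ne.symm hk.2)
  have hg0 : 0 < g 0 := by
    apply Finset.prod_pos
    intro k hk
    simp only [hTX, Finset.mem_filter] at hk
    have := hX.eigenvalues_nonneg k
    rw [mul_zero, add_zero]
    exact lt_of_le_of_ne this (Ne.symm hk.2)
  have hfApos : ∀ s : ℝ, 0 < s → 0 < fA s := by
    intro s hs
    apply Finset.prod_pos
    intro k hk
    simp only [hTA, Finset.mem_filter] at hk
    have := hA.eigenvalues_nonneg k
    linarith
  have hfBpos : ∀ s : ℝ, 0 < s → 0 < fB s := by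
    intro s hs
    apply Finset.prod_pos
    intro k hk
    simp only [hTB, Finset.mem_filter] at hk
    have := hB.eigenvalues_nonneg k
    linarith
  set c0 : ℝ := ((1 : ℝ) / 2) ^ (2 * M) * 2 ^ (2 * zX) with hc0
  have hc0pos : 0 < c0 := by positivity
  -- continuity / limits
  have tfA : Tendsto fA (𝓝[>] 0) (𝓝 (fA 0)) := by
    have : Continuous fA := continuous_finset_prod _ (fun k _ => continuous_const.add continuous_id)
    exact (this.tendsto 0).mono_left nhdsWithin_le_nhds
  have tfB : Tendsto fB (𝓝[>] 0) (𝓝 (fB 0)) := by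
    have : Continuous fB := continuous_finset_prod _ (fun k _ => continuous_const.add continuous_id)
    exact (this.tendsto 0).mono_left nhdsWithin_le_nhds
  have tg : Tendsto g (𝓝[>] 0) (𝓝 (g 0)) := by
    have : Continuous g := continuous_finset_prod _ (fun k _ => continuous_const.add (continuous_const.mul continuous_id))
    exact (this.tendsto 0).mono_left nhdsWithin_le_nhds
  have h1 : Tendsto (fun s => c0 * (g s ^ 2 / (fA s * fB s))) (𝓝[>] 0)
      (𝓝 (c0 * (g 0 ^ 2 / (fA 0 * fB 0)))) :=
    tendsto_const_nhds.mul ((tg.pow 2).div (tfA.mul tfB) (by positivity))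
  have hlimpos : 0 < c0 * (g 0 ^ 2 / (fA 0 * fB 0)) := by positivity
  have h2 : Tendsto (fun s : ℝ => (s ^ m)⁻¹) (𝓝[>] 0) atTop := by
    apply tendsto_inv_nhdsGT_zero.comp
    apply tendsto_nhdsWithin_of_tendsto_nhds_of_eventually_within
    · exact ((continuous_pow m).tendsto' 0 0 (by simp [zero_pow hm0.ne'])).mono_left
        nhdsWithin_le_nhds
    · filter_upwards [self_mem_nhdsWithin] with s hs
      exact pow_pos (Set.mem_Ioi.mp hs) m
  have hmain : Tendsto (fun s : ℝ => c0 * (g s ^ 2 / (fA s * fB s)) * (s ^ m)⁻¹)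
      (𝓝[>] 0) atTop := h1.pos_mul_atTop hlimpos h2
  apply hmain.congr'
  filter_upwards [self_mem_nhdsWithin] with s hs
  have hs0 : (0 : ℝ) < s := hs
  rw [hdetA s, hdetB s, hdetX s]
  have hpow : s ^ zA * s ^ zB = s ^ (2 * zX) * s ^ m := by
    rw [← pow_add, ← pow_add, hzz]
  have hfAs := hfApos s hs0
  have hfBs := hfBpos s hs0
  rw [show s ^ zA * fA s * (s ^ zB * fB s) = s ^ (2 * zX) * s ^ m * (fA s * fB s) by
    rw [← hpow]; ring]
  rw [hc0]
  field_simp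
  ring

/-- second part of the paper's Corollary 1. If `r_i + r_j < 2 r_{ij}`
for every pair `i ≠ j`, then `P̄_e(σ²) → 0` as `σ² → 0⁺`. -/
theorem stmt2 {N M L : ℕ} (hN : 1 ≤ N) (hM : 1 ≤ M) (hL : 2 ≤ L)
    (Φ : Matrix (Fin M) (Fin N) ℝ) (S : Fin L → Matrix (Fin N) (Fin N) ℝ)
    (hS : ∀ i, (S i).PosSemidef)
    (p : Fin L → ℝ) (hp : ∀ i, 0 < p i) (hpsum : ∑ i, p i = 1)
    (h : ∀ i j, i ≠ j →
      (Φ * S i * Φᵀ).rank + (Φ * S j * Φᵀ).rank < 2 * (Φ * (S i + S j) * Φᵀ).rank) :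
    Tendsto (fun s : ℝ => Pbar Φ S p s) (𝓝[>] (0 : ℝ)) (𝓝 0) := by
  have hpsd : ∀ i : Fin L, (Φ * S i * Φᵀ).PosSemidef := by
    intro i
    have := (hS i).mul_mul_conjTranspose_same Φ
    rwa [Matrix.conjTranspose_eq_transpose_of_trivial] at this
  have hpsdX : ∀ i j : Fin L, (Φ * (S i + S j) * Φᵀ).PosSemidef := by
    intro i j
    have := ((hS i).add (hS j)).mul_mul_conjTranspose_same Φ
    rwa [Matrix.conjTranspose_eq_transpose_of_trivial] at this
  have hterm : ∀ i j : Fin L, i ≠ j →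
      Tendsto (fun s : ℝ => Real.exp (-Kexp Φ (S i) (S j) s)) (𝓝[>] (0 : ℝ)) (𝓝 0) := by
    intro i j hij
    have hK : Tendsto (fun s : ℝ => Kexp Φ (S i) (S j) s) (𝓝[>] (0 : ℝ)) atTop := by
      have hr := key_tendsto_s2 (Φ * S i * Φᵀ) (Φ * S j * Φᵀ) (Φ * (S i + S j) * Φᵀ)
        (hpsd i) (hpsd j) (hpsdX i j) (h i j hij)
      have hlog := Real.tendsto_log_atTop.comp hr
      simpa only [Kexp, Function.comp] using hlog.const_mul_atTop (by norm_num : (0:ℝ) < 1/4)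
    exact Real.tendsto_exp_atBot.comp (tendsto_neg_atTop_atBot.comp hK)
  simp only [Pbar]
  rw [show (0 : ℝ) = ∑ _i : Fin L, ∑ _j ∈ Finset.univ.filter (fun j => j ≠ _i), (0 : ℝ) by simp]
  apply tendsto_finset_sum
  intro i _
  apply tendsto_finset_sum
  intro j hj
  have hij : j ≠ i := (Finset.mem_filter.mp hj).2
  simpa using (hterm i j (Ne.symm hij)).const_mul (Real.sqrt (p i * p j))
end

section
/- For every σ² > 0 and every pair i ≠ j, exp(−K_{ij}(σ²)) = 2^{r_{ij}/2}·(σ²)^{d(i,j)}·( ∏_{k=1}^{r_i}(λ_{i,k}+σ²)·∏_{k=1}^{r_j}(λ_{j,k}+σ²) )^{1/4} / ( ∏_{k=1}^{r_{ij}}(λ_{ij,k}+2σ²) )^{1/2}, where λ_{i,1},…,λ_{i,r_i} are the nonzero eigenvalues (listed with multiplicity) of ΦΣ_iΦᵀ, λ_{j,1},…,λ_{j,r_j} those of ΦΣ_jΦᵀ, and λ_{ij,1},…,λ_{ij,r_{ij}} those of Φ(Σ_i+Σ_j)Φᵀ. (Key identity from the proof of the paper's Lemma 1, Appendix A.) 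-/
open Matrix Filter Topology
open scoped Classical

lemma det_shift {n : ℕ} {S : Matrix (Fin n) (Fin n) ℝ} (hS : S.IsHermitian) (t : ℝ) :
    (S + t • (1 : Matrix (Fin n) (Fin n) ℝ)).det = ∏ k, (hS.eigenvalues k + t) := by
  set U : Matrix (Fin n) (Fin n) ℝ := (hS.eigenvectorUnitary : Matrix (Fin n) (Fin n) ℝ) with hUdef
  have hU : U * star U = 1 := (Matrix.mem_unitaryGroup_iff).mp hS.eigenvectorUnitary.2
  have key : S + t • (1 : Matrix (Fin n) (Fin n) ℝ)
      = U * (Matrix.diagonal (fun k => hS.eigenvalues k + t)) * star U := by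
    have h1 : t • (1 : Matrix (Fin n) (Fin n) ℝ) = U * (t • 1) * star U := by
      rw [Matrix.mul_smul, mul_one, Matrix.smul_mul, hU]
    conv_lhs => rw [hS.spectral_theorem, Unitary.conjStarAlgAut_apply, h1]
    rw [← Matrix.add_mul, ← Matrix.mul_add]
    congr 2
    rw [Matrix.smul_one_eq_diagonal, Matrix.diagonal_add]
    simp [RCLike.ofReal_real_eq_id, funext_iff]
  rw [key, det_mul_right_comm, hU, one_mul, Matrix.det_diagonal]

lemma det_shift_rank {n : ℕ} {S : Matrix (Fin n) (Fin n) ℝ} (hS : S.IsHermitian) (t : ℝ) :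
    (S + t • (1 : Matrix (Fin n) (Fin n) ℝ)).det
      = t ^ (n - S.rank) *
        ∏ k ∈ Finset.univ.filter (fun k => hS.eigenvalues k ≠ 0), (hS.eigenvalues k + t) := by
  rw [det_shift hS t,
    ← Finset.prod_filter_mul_prod_filter_not Finset.univ (fun k => hS.eigenvalues k = 0)]
  have h1 : S.rank = (Finset.univ.filter (fun k => ¬ hS.eigenvalues k = 0)).card := by
    rw [hS.rank_eq_card_non_zero_eigs, Fintype.card_subtype]
  have h2 := Finset.card_filter_add_card_filter_not
    (s := (Finset.univ : Finset (Fin n))) (p := fun k => hS.eigenvalues k = 0)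
  simp only [Finset.card_univ, Fintype.card_fin] at h2
  congr 1
  rw [Finset.prod_congr rfl (fun k hk => by
    rw [(Finset.mem_filter.mp hk).2, zero_add]), Finset.prod_const]
  congr 1
  omega

lemma rank_le_dim {n : ℕ} (S : Matrix (Fin n) (Fin n) ℝ) : S.rank ≤ n :=
  S.rank_le_card_height.trans (by simp)

/-- key identity in Appendix A of the paper. For every `σ² > 0` and
`i ≠ j`, `exp(−K_{ij}(σ²)) = 2^{r_{ij}/2}·(σ²)^{d(i,j)}·
(∏_k(λ_{i,k}+σ²)·∏_k(λ_{j,k}+σ²))^{1/4} / (∏_k(λ_{ij,k}+2σ²))^{1/2}`,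
the products running over the nonzero eigenvalues of `ΦΣ_iΦᵀ`, `ΦΣ_jΦᵀ`, `Φ(Σ_i+Σ_j)Φᵀ`. -/
theorem stmt4 {N M : ℕ} (hN : 1 ≤ N) (hM : 1 ≤ M)
    (Φ : Matrix (Fin M) (Fin N) ℝ)
    (A B : Matrix (Fin N) (Fin N) ℝ) (hA : A.PosSemidef) (hB : B.PosSemidef)
    (s : ℝ) (hs : 0 < s)
    (hi : (Φ * A * Φᵀ).IsHermitian) (hj : (Φ * B * Φᵀ).IsHermitian)
    (hij : (Φ * (A + B) * Φᵀ).IsHermitian) :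
    Real.exp (-Kexp Φ A B s) =
      (2 : ℝ) ^ (((Φ * (A + B) * Φᵀ).rank : ℝ) / 2) * s ^ dExp Φ A B *
        ((∏ k ∈ Finset.univ.filter (fun k => hi.eigenvalues k ≠ 0), (hi.eigenvalues k + s)) *
          (∏ k ∈ Finset.univ.filter (fun k => hj.eigenvalues k ≠ 0),
            (hj.eigenvalues k + s))) ^ ((1 : ℝ) / 4) /
        (∏ k ∈ Finset.univ.filter (fun k => hij.eigenvalues k ≠ 0),
          (hij.eigenvalues k + 2 * s)) ^ ((1 : ℝ) / 2) := by
  have hT : Φᵀ = Φᴴ := by ext i k; simp [Matrix.conjTranspose_apply]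
  have psdA : (Φ * A * Φᵀ).PosSemidef := by
    rw [hT]; exact hA.mul_mul_conjTranspose_same Φ
  have psdB : (Φ * B * Φᵀ).PosSemidef := by
    rw [hT]; exact hB.mul_mul_conjTranspose_same Φ
  have psdC : (Φ * (A + B) * Φᵀ).PosSemidef := by
    rw [hT]; exact (hA.add hB).mul_mul_conjTranspose_same Φ
  have hInn : ∀ k, 0 ≤ hi.eigenvalues k := fun k => psdA.eigenvalues_nonneg k
  have hJnn : ∀ k, 0 ≤ hj.eigenvalues k := fun k => psdB.eigenvalues_nonneg k
  have hCnn : ∀ k, 0 ≤ hij.eigenvalues k := fun k => psdC.eigenvalues_nonneg k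
  -- determinant formulas
  have hdetI := det_shift_rank hi s
  have hdetJ := det_shift_rank hj s
  have hdetC := det_shift_rank hij (2 * s)
  -- introduce opaque names
  obtain ⟨PI, hPIdef⟩ : ∃ x : ℝ,
      (∏ k ∈ Finset.univ.filter (fun k => hi.eigenvalues k ≠ 0), (hi.eigenvalues k + s)) = x :=
    ⟨_, rfl⟩
  obtain ⟨PJ, hPJdef⟩ : ∃ x : ℝ,
      (∏ k ∈ Finset.univ.filter (fun k => hj.eigenvalues k ≠ 0), (hj.eigenvalues k + s)) = x :=
    ⟨_, rfl⟩
  obtain ⟨PC, hPCdef⟩ : ∃ x : ℝ,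
      (∏ k ∈ Finset.univ.filter (fun k => hij.eigenvalues k ≠ 0),
        (hij.eigenvalues k + 2 * s)) = x := ⟨_, rfl⟩
  have hPI : 0 < PI := hPIdef ▸ Finset.prod_pos fun k _ => by have := hInn k; linarith
  have hPJ : 0 < PJ := hPJdef ▸ Finset.prod_pos fun k _ => by have := hJnn k; linarith
  have hPC : 0 < PC := hPCdef ▸ Finset.prod_pos fun k _ => by have := hCnn k; linarith
  obtain ⟨rI, hrI⟩ : ∃ r : ℕ, (Φ * A * Φᵀ).rank = r := ⟨_, rfl⟩
  obtain ⟨rJ, hrJ⟩ : ∃ r : ℕ, (Φ * B * Φᵀ).rank = r := ⟨_, rfl⟩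
  obtain ⟨rC, hrC⟩ : ∃ r : ℕ, (Φ * (A + B) * Φᵀ).rank = r := ⟨_, rfl⟩
  have hrIM : rI ≤ M := hrI ▸ rank_le_dim _
  have hrJM : rJ ≤ M := hrJ ▸ rank_le_dim _
  have hrCM : rC ≤ M := hrC ▸ rank_le_dim _
  rw [hPIdef, hrI] at hdetI
  rw [hPJdef, hrJ] at hdetJ
  rw [hPCdef, hrC] at hdetC
  have hd : dExp Φ A B = (2 * (rC : ℝ) - rI - rJ) / 4 := by
    unfold dExp; rw [hrI, hrJ, hrC]
  rw [hPIdef, hPJdef, hPCdef, hrC, hd]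
  -- positivity facts
  have h2s : (0 : ℝ) < 2 * s := by linarith
  have ha : (0 : ℝ) < (1 / 2 : ℝ) ^ M * ((2 * s) ^ (M - rC) * PC) :=
    mul_pos (pow_pos one_half_pos M) (mul_pos (pow_pos h2s _) hPC)
  have hb : (0 : ℝ) < s ^ (M - rI) * PI := mul_pos (pow_pos hs _) hPI
  have hc : (0 : ℝ) < s ^ (M - rJ) * PJ := mul_pos (pow_pos hs _) hPJ
  -- rewrite Kexp
  have hKexp : Kexp Φ A B s = (1 / 4) * Real.log
      (((1 / 2 : ℝ) ^ M * ((2 * s) ^ (M - rC) * PC)) ^ 2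
        / ((s ^ (M - rI) * PI) * (s ^ (M - rJ) * PJ))) := by
    unfold Kexp
    rw [Matrix.det_smul, Fintype.card_fin, hdetI, hdetJ, hdetC]
  rw [hKexp]
  have hRpos : (0 : ℝ) < (2 : ℝ) ^ ((rC : ℝ) / 2) * s ^ ((2 * (rC : ℝ) - rI - rJ) / 4)
      * (PI * PJ) ^ ((1 : ℝ) / 4) / PC ^ ((1 : ℝ) / 2) :=
    div_pos (mul_pos (mul_pos (Real.rpow_pos_of_pos (by norm_num) _)
      (Real.rpow_pos_of_pos hs _)) (Real.rpow_pos_of_pos (mul_pos hPI hPJ) _))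
      (Real.rpow_pos_of_pos hPC _)
  have hcastI : ((M - rI : ℕ) : ℝ) = (M : ℝ) - rI := by
    rw [Nat.cast_sub hrIM]
  have hcastJ : ((M - rJ : ℕ) : ℝ) = (M : ℝ) - rJ := by
    rw [Nat.cast_sub hrJM]
  have hcastC : ((M - rC : ℕ) : ℝ) = (M : ℝ) - rC := by
    rw [Nat.cast_sub hrCM]
  have hlog : -((1 / 4 : ℝ) * Real.log
      (((1 / 2 : ℝ) ^ M * ((2 * s) ^ (M - rC) * PC)) ^ 2
        / ((s ^ (M - rI) * PI) * (s ^ (M - rJ) * PJ))))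
      = Real.log ((2 : ℝ) ^ ((rC : ℝ) / 2) * s ^ ((2 * (rC : ℝ) - rI - rJ) / 4)
        * (PI * PJ) ^ ((1 : ℝ) / 4) / PC ^ ((1 : ℝ) / 2)) := by
    rw [Real.log_div (pow_ne_zero 2 ha.ne') (mul_ne_zero hb.ne' hc.ne'),
      Real.log_pow,
      Real.log_mul (pow_ne_zero M (by norm_num : (1/2:ℝ) ≠ 0))
        (mul_ne_zero (pow_ne_zero _ h2s.ne') hPC.ne'),
      Real.log_pow,
      Real.log_mul (pow_ne_zero _ h2s.ne') hPC.ne', Real.log_pow,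
      Real.log_mul hb.ne' hc.ne',
      Real.log_mul (pow_ne_zero _ hs.ne') hPI.ne', Real.log_pow,
      Real.log_mul (pow_ne_zero _ hs.ne') hPJ.ne', Real.log_pow,
      Real.log_mul (two_ne_zero) hs.ne']
    rw [Real.log_div (mul_ne_zero (mul_ne_zero
        (Real.rpow_pos_of_pos (by norm_num : (0:ℝ) < 2) _).ne'
        (Real.rpow_pos_of_pos hs _).ne') (Real.rpow_pos_of_pos (mul_pos hPI hPJ) _).ne')
        (Real.rpow_pos_of_pos hPC _).ne',
      Real.log_mul (mul_ne_zero (Real.rpow_pos_of_pos (by norm_num : (0:ℝ) < 2) _).ne'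
        (Real.rpow_pos_of_pos hs _).ne') (Real.rpow_pos_of_pos (mul_pos hPI hPJ) _).ne',
      Real.log_mul (Real.rpow_pos_of_pos (by norm_num : (0:ℝ) < 2) _).ne'
        (Real.rpow_pos_of_pos hs _).ne',
      Real.log_rpow (by norm_num : (0:ℝ) < 2), Real.log_rpow hs,
      Real.log_rpow (mul_pos hPI hPJ), Real.log_rpow hPC,
      Real.log_mul hPI.ne' hPJ.ne',
      hcastI, hcastJ, hcastC,
      show Real.log (1/2 : ℝ) = -Real.log 2 by rw [one_div, Real.log_inv]]
    ring
  rw [hlog, Real.exp_log hRpos]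
end

section
/- Let L = 2 and assume rank(Σ_1) = rank(Σ_2) = r_Σ with r_Σ < N and Im(Σ_1) ≠ Im(Σ_2). Then there exists a vector φ ∈ ℝ^N with φᵀΣ_1φ = 0 and φᵀΣ_2φ > 0 (i.e., φ ∈ Null(Σ_1) \ Null(Σ_2)); and for any such φ, taking the single-row measurement matrix Φ = φᵀ (so M = 1), one has r_1 = 0, r_2 = 1, r_{12} = 1, hence d(1,2) = 1/4 and lim_{σ²→0⁺} P̄_e(σ²) = 0. Thus one designed measurement suffices for reliable two-class classification in the low-noise limit. (Paper's Proposition 3.) -/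
open Matrix Filter Topology
open scoped Classical

/-- For a symmetric operator on Euclidean space, the kernel is the orthogonal
complement of the range. -/
lemma symmKer_aux {N : ℕ} (T : EuclideanSpace ℝ (Fin N) →ₗ[ℝ] EuclideanSpace ℝ (Fin N))
    (hT : T.IsSymmetric) : LinearMap.ker T = (LinearMap.range T)ᗮ := by
  ext x
  simp only [LinearMap.mem_ker, Submodule.mem_orthogonal]
  constructor
  · rintro hx u ⟨y, rfl⟩
    rw [hT y x, hx, inner_zero_right]
  · intro h
    have h1 := h (T (T x)) ⟨T x, rfl⟩
    rw [hT (T x) x] at h1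
    exact inner_self_eq_zero.mp h1

/-- Two real symmetric matrices with the same kernel have the same range. -/
lemma herm_range_of_ker_aux {N : ℕ} {A B : Matrix (Fin N) (Fin N) ℝ}
    (hA : A.IsHermitian) (hB : B.IsHermitian)
    (h : ∀ x, A *ᵥ x = 0 ↔ B *ᵥ x = 0) :
    LinearMap.range A.mulVecLin = LinearMap.range B.mulVecLin := by
  have e0 : ∀ (v : Fin N → ℝ), (WithLp.equiv 2 (Fin N → ℝ)).symm v = 0 ↔ v = 0 := by
    intro v
    constructor
    · intro hv; simpa using congrArg (WithLp.equiv 2 (Fin N → ℝ)) hv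
    · intro hv; simp [hv]
  have hker : LinearMap.ker (Matrix.toEuclideanLin A) = LinearMap.ker (Matrix.toEuclideanLin B) := by
    ext x
    simp only [LinearMap.mem_ker, Matrix.toEuclideanLin_apply, e0]
    exact (e0 _).trans ((h _).trans (e0 _).symm)
  have hrange : LinearMap.range (Matrix.toEuclideanLin A)
      = LinearMap.range (Matrix.toEuclideanLin B) := by
    have kA := symmKer_aux _ (Matrix.isHermitian_iff_isSymmetric.mp hA)
    have kB := symmKer_aux _ (Matrix.isHermitian_iff_isSymmetric.mp hB)
    have := congrArg Submodule.orthogonal (kA.symm.trans (hker.trans kB))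
    simpa [Submodule.orthogonal_orthogonal] using this
  ext y
  constructor
  · rintro ⟨x, rfl⟩
    have : (WithLp.equiv 2 (Fin N → ℝ)).symm (A.mulVecLin x)
        ∈ LinearMap.range (Matrix.toEuclideanLin A) :=
      ⟨(WithLp.equiv 2 (Fin N → ℝ)).symm x, by simp [Matrix.toEuclideanLin_apply, Matrix.mulVecLin]⟩
    rw [hrange] at this
    obtain ⟨z, hz⟩ := this
    exact ⟨WithLp.equiv 2 (Fin N → ℝ) z, by
      have := congrArg (WithLp.equiv 2 (Fin N → ℝ)) hz
      simpa [Matrix.toEuclideanLin_apply, Matrix.mulVecLin] using this⟩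
  · rintro ⟨x, rfl⟩
    have : (WithLp.equiv 2 (Fin N → ℝ)).symm (B.mulVecLin x)
        ∈ LinearMap.range (Matrix.toEuclideanLin B) :=
      ⟨(WithLp.equiv 2 (Fin N → ℝ)).symm x, by simp [Matrix.toEuclideanLin_apply, Matrix.mulVecLin]⟩
    rw [← hrange] at this
    obtain ⟨z, hz⟩ := this
    exact ⟨WithLp.equiv 2 (Fin N → ℝ) z, by
      have := congrArg (WithLp.equiv 2 (Fin N → ℝ)) hz
      simpa [Matrix.toEuclideanLin_apply, Matrix.mulVecLin] using this⟩

/-- Conjugating a matrix by a single row vector gives the quadratic form. -/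
lemma rowConj_aux {N : ℕ} (φ : Fin N → ℝ) (A : Matrix (Fin N) (Fin N) ℝ) :
    (Matrix.of (fun _ => φ) : Matrix (Fin 1) (Fin N) ℝ) * A *
        (Matrix.of (fun _ => φ) : Matrix (Fin 1) (Fin N) ℝ)ᵀ
      = Matrix.of (fun _ _ => φ ⬝ᵥ (A *ᵥ φ)) := by
  ext i j
  simp only [Matrix.mul_apply, Matrix.transpose_apply, Matrix.of_apply, dotProduct,
    Matrix.mulVec, Finset.sum_mul, Finset.mul_sum]
  rw [Finset.sum_comm]
  congr 1; ext k; congr 1; ext l; ring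

/-- A nonzero constant `1×1` matrix has rank one. -/
lemma rank_one_aux {c : ℝ} (hc : c ≠ 0) :
    (Matrix.of (fun _ _ => c) : Matrix (Fin 1) (Fin 1) ℝ).rank = 1 := by
  refine le_antisymm
    (by simpa using (Matrix.of (fun _ _ => c) : Matrix (Fin 1) (Fin 1) ℝ).rank_le_card_width) ?_
  rw [Nat.one_le_iff_ne_zero]
  intro h
  rw [Matrix.rank, Submodule.finrank_eq_zero, LinearMap.range_eq_bot] at h
  have := congrFun (LinearMap.congr_fun h (fun _ => 1)) 0
  simp [Matrix.mulVecLin, Matrix.mulVec, dotProduct] at this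
  exact hc this

/-- Paper's Proposition 3. For two zero-mean classes of equal rank
`r_Σ < N` with distinct images, there exists `φ ∈ Null(Σ₁) \ Null(Σ₂)`, and any such
single-row measurement `Φ = φᵀ` yields `r₁ = 0`, `r₂ = 1`, `r₁₂ = 1`, `d(1,2) = 1/4`,
hence `P̄_e → 0` at low noise: one designed measurement suffices. -/
theorem stmt9 {N : ℕ} (hN : 1 ≤ N) (rSig : ℕ) (hrN : rSig < N)
    (S1 S2 : Matrix (Fin N) (Fin N) ℝ) (hS1 : S1.PosSemidef) (hS2 : S2.PosSemidef)
    (hrank1 : S1.rank = rSig) (hrank2 : S2.rank = rSig)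
    (him : LinearMap.range S1.mulVecLin ≠ LinearMap.range S2.mulVecLin)
    (p : Fin 2 → ℝ) (hp : ∀ i, 0 < p i) (hpsum : ∑ i, p i = 1) :
    (∃ φ : Fin N → ℝ, φ ⬝ᵥ (S1 *ᵥ φ) = 0 ∧ 0 < φ ⬝ᵥ (S2 *ᵥ φ)) ∧
    ∀ φ : Fin N → ℝ, φ ⬝ᵥ (S1 *ᵥ φ) = 0 → 0 < φ ⬝ᵥ (S2 *ᵥ φ) →
      ∀ Φ : Matrix (Fin 1) (Fin N) ℝ, Φ = Matrix.of (fun _ => φ) →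
        (Φ * S1 * Φᵀ).rank = 0 ∧ (Φ * S2 * Φᵀ).rank = 1 ∧
        (Φ * (S1 + S2) * Φᵀ).rank = 1 ∧ dExp Φ S1 S2 = 1 / 4 ∧
        Tendsto (fun s : ℝ => Pbar Φ ![S1, S2] p s) (𝓝[>] (0 : ℝ)) (𝓝 0) := by
  constructor
  · -- existence
    by_contra hno
    push_neg at hno
    have hle : LinearMap.ker S1.mulVecLin ≤ LinearMap.ker S2.mulVecLin := by
      intro x hx
      rw [LinearMap.mem_ker, Matrix.mulVecLin_apply] at hx ⊢
      have h0 : x ⬝ᵥ (S1 *ᵥ x) = 0 := by rw [hx, dotProduct_zero]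
      have h2 := hno x h0
      have hge : (0:ℝ) ≤ x ⬝ᵥ (S2 *ᵥ x) := by simpa using hS2.dotProduct_mulVec_nonneg x
      have hz : x ⬝ᵥ (S2 *ᵥ x) = 0 := le_antisymm h2 hge
      exact (hS2.dotProduct_mulVec_zero_iff x).mp (by simpa using hz)
    have hfr1 : Module.finrank ℝ (LinearMap.range S1.mulVecLin)
        + Module.finrank ℝ (LinearMap.ker S1.mulVecLin) = N := by
      simpa using LinearMap.finrank_range_add_finrank_ker S1.mulVecLin
    have hfr2 : Module.finrank ℝ (LinearMap.range S2.mulVecLin)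
        + Module.finrank ℝ (LinearMap.ker S2.mulVecLin) = N := by
      simpa using LinearMap.finrank_range_add_finrank_ker S2.mulVecLin
    have hr1 : Module.finrank ℝ (LinearMap.range S1.mulVecLin) = rSig := hrank1
    have hr2 : Module.finrank ℝ (LinearMap.range S2.mulVecLin) = rSig := hrank2
    have hkereq : LinearMap.ker S1.mulVecLin = LinearMap.ker S2.mulVecLin :=
      Submodule.eq_of_le_of_finrank_le hle (by omega)
    refine him (herm_range_of_ker_aux hS1.1 hS2.1 (fun x => ?_))
    constructor
    · intro hx
      have : x ∈ LinearMap.ker S1.mulVecLin := by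
        rw [LinearMap.mem_ker, Matrix.mulVecLin_apply]; exact hx
      rw [hkereq, LinearMap.mem_ker, Matrix.mulVecLin_apply] at this; exact this
    · intro hx
      have : x ∈ LinearMap.ker S2.mulVecLin := by
        rw [LinearMap.mem_ker, Matrix.mulVecLin_apply]; exact hx
      rw [← hkereq, LinearMap.mem_ker, Matrix.mulVecLin_apply] at this; exact this
  · -- the measurement part
    intro φ hφ1 hφ2 Φ hΦ
    subst hΦ
    set c : ℝ := φ ⬝ᵥ (S2 *ᵥ φ) with hc
    have hcpos : 0 < c := hφ2
    have E1 : (Matrix.of (fun _ => φ) : Matrix (Fin 1) (Fin N) ℝ) * S1 *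
        (Matrix.of (fun _ => φ) : Matrix (Fin 1) (Fin N) ℝ)ᵀ = 0 := by
      rw [rowConj_aux]; ext i j; simp [hφ1]
    have E2 : (Matrix.of (fun _ => φ) : Matrix (Fin 1) (Fin N) ℝ) * S2 *
        (Matrix.of (fun _ => φ) : Matrix (Fin 1) (Fin N) ℝ)ᵀ
        = Matrix.of (fun _ _ => c) := rowConj_aux φ S2
    have hq12 : φ ⬝ᵥ ((S1 + S2) *ᵥ φ) = c := by
      rw [Matrix.add_mulVec, dotProduct_add, hφ1, zero_add]
    have E12 : (Matrix.of (fun _ => φ) : Matrix (Fin 1) (Fin N) ℝ) * (S1 + S2) *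
        (Matrix.of (fun _ => φ) : Matrix (Fin 1) (Fin N) ℝ)ᵀ
        = Matrix.of (fun _ _ => c) := by
      rw [rowConj_aux, hq12]
    have r1 : ((Matrix.of (fun _ => φ) : Matrix (Fin 1) (Fin N) ℝ) * S1 *
        (Matrix.of (fun _ => φ) : Matrix (Fin 1) (Fin N) ℝ)ᵀ).rank = 0 := by
      rw [E1]; exact Matrix.rank_zero
    have r2 : ((Matrix.of (fun _ => φ) : Matrix (Fin 1) (Fin N) ℝ) * S2 *
        (Matrix.of (fun _ => φ) : Matrix (Fin 1) (Fin N) ℝ)ᵀ).rank = 1 := by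
      rw [E2]; exact rank_one_aux (ne_of_gt hcpos)
    have r12 : ((Matrix.of (fun _ => φ) : Matrix (Fin 1) (Fin N) ℝ) * (S1 + S2) *
        (Matrix.of (fun _ => φ) : Matrix (Fin 1) (Fin N) ℝ)ᵀ).rank = 1 := by
      rw [E12]; exact rank_one_aux (ne_of_gt hcpos)
    refine ⟨r1, r2, r12, ?_, ?_⟩
    · unfold dExp
      rw [r1, r2, r12]
      norm_num
    · -- the limit
      have hK1 : ∀ s : ℝ, Kexp (Matrix.of (fun _ => φ) : Matrix (Fin 1) (Fin N) ℝ) S1 S2 s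
          = (1/4) * Real.log (((1/2)*(c+2*s))^2 / (s*(c+s))) := by
        intro s
        unfold Kexp
        rw [E1, E2, E12]
        congr 1
        rw [Matrix.det_fin_one, Matrix.det_fin_one, Matrix.det_fin_one]
        simp only [Matrix.smul_apply, Matrix.add_apply, Matrix.one_apply_eq, Matrix.of_apply,
          Matrix.zero_apply, smul_eq_mul]
        ring_nf
      have hK2 : ∀ s : ℝ, Kexp (Matrix.of (fun _ => φ) : Matrix (Fin 1) (Fin N) ℝ) S2 S1 s
          = (1/4) * Real.log (((1/2)*(c+2*s))^2 / (s*(c+s))) := by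
        intro s
        unfold Kexp
        rw [add_comm S2 S1, E1, E2, E12]
        congr 1
        rw [Matrix.det_fin_one, Matrix.det_fin_one, Matrix.det_fin_one]
        simp only [Matrix.smul_apply, Matrix.add_apply, Matrix.one_apply_eq, Matrix.of_apply,
          Matrix.zero_apply, smul_eq_mul]
        ring_nf
      have hf0 : (Finset.univ.filter (fun j => j ≠ (0:Fin 2))) = {1} := by
        ext j; fin_cases j <;> simp
      have hf1 : (Finset.univ.filter (fun j => j ≠ (1:Fin 2))) = {0} := by
        ext j; fin_cases j <;> simp
      have hP : ∀ s : ℝ, Pbar (Matrix.of (fun _ => φ) : Matrix (Fin 1) (Fin N) ℝ) ![S1, S2] p s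
          = (Real.sqrt (p 0 * p 1) + Real.sqrt (p 1 * p 0)) *
            Real.exp (-((1/4) * Real.log (((1/2)*(c+2*s))^2 / (s*(c+s))))) := by
        intro s
        unfold Pbar
        rw [Fin.sum_univ_two, hf0, hf1, Finset.sum_singleton, Finset.sum_singleton]
        simp only [Matrix.cons_val_zero, Matrix.cons_val_one, Matrix.head_cons]
        rw [hK1 s, hK2 s]
        ring
      have hnum : Tendsto (fun s : ℝ => ((1/2)*(c+2*s))^2) (𝓝[>] (0:ℝ)) (𝓝 (((1/2)*c)^2)) := by
        have hcont : Continuous fun s : ℝ => ((1/2)*(c+2*s))^2 := by continuity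
        simpa using (hcont.tendsto 0).mono_left nhdsWithin_le_nhds
      have hden : Tendsto (fun s : ℝ => s*(c+s)) (𝓝[>] (0:ℝ)) (𝓝[>] (0:ℝ)) := by
        rw [tendsto_nhdsWithin_iff]
        constructor
        · have hcont : Continuous fun s : ℝ => s*(c+s) := by continuity
          simpa using (hcont.tendsto 0).mono_left nhdsWithin_le_nhds
        · filter_upwards [self_mem_nhdsWithin] with s hs
          have hs' : (0:ℝ) < s := hs
          exact mul_pos hs' (by linarith)
      have hinv : Tendsto (fun s : ℝ => (s*(c+s))⁻¹) (𝓝[>] (0:ℝ)) atTop :=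
        tendsto_inv_nhdsGT_zero.comp hden
      have hR : Tendsto (fun s : ℝ => ((1/2)*(c+2*s))^2 / (s*(c+s))) (𝓝[>] (0:ℝ)) atTop := by
        simpa [div_eq_mul_inv] using hnum.pos_mul_atTop (by positivity) hinv
      have hlog : Tendsto (fun s : ℝ => Real.log (((1/2)*(c+2*s))^2 / (s*(c+s))))
          (𝓝[>] (0:ℝ)) atTop := Real.tendsto_log_atTop.comp hR
      have hbot : Tendsto (fun s : ℝ =>
          -((1/4) * Real.log (((1/2)*(c+2*s))^2 / (s*(c+s))))) (𝓝[>] (0:ℝ)) atBot := by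
        have := hlog.const_mul_atTop_of_neg (show (-(1/4) : ℝ) < 0 by norm_num)
        simpa [neg_mul] using this
      have hexp : Tendsto (fun s : ℝ =>
          Real.exp (-((1/4) * Real.log (((1/2)*(c+2*s))^2 / (s*(c+s))))))
          (𝓝[>] (0:ℝ)) (𝓝 0) := Real.tendsto_exp_atBot.comp hbot
      have := hexp.const_mul (Real.sqrt (p 0 * p 1) + Real.sqrt (p 1 * p 0))
      rw [mul_zero] at this
      exact this.congr (fun s => (hP s).symm)
end

section
/- Let Σ_1, Σ_2 be real symmetric positive semidefinite N×N matrices with rank(Σ_1) = rank(Σ_2) = r_Σ, 1 ≤ r_Σ < N, and dim(Null(Σ_1) ∩ Null(Σ_2)) = max{N − 2r_Σ, 0}. Set n_Σ = min{N − r_Σ, r_Σ}. Let u_1,…,u_{n_{12}} (n_{12} = max{N − 2r_Σ, 0}) be an orthonormal basis of Null(Σ_1) ∩ Null(Σ_2), and let v_1,…,v_{n_Σ} and w_1,…,w_{n_Σ} be vectors such that {u_k} ∪ {v_k} is an orthonormal basis of Null(Σ_1) and {u_k} ∪ {w_k} is an orthonormal basis of Null(Σ_2). For integers 0 ≤ M_1,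 M_2 ≤ n_Σ with M = M_1 + M_2 ≥ 1, let Φ ∈ ℝ^{M×N} have as rows M_1 of the vectors v_k and M_2 of the vectors w_k. Then rank(ΦΣ_1Φᵀ) = M_2, rank(ΦΣ_2Φᵀ) = M_1, and rank(Φ(Σ_1+Σ_2)Φᵀ) = M_1 + M_2; consequently the exponent d(1,2) = (2r_{12} − r_1 − r_2)/4 equals M/4. (Achievability construction of the paper's Proposition 4, Appendix D.) -/
open Matrix Filter Topology
open scoped Classical

/-- kernel of `A S Aᵀ` for PSD `S` is the preimage of `ker S` under `Aᵀ`. -/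
lemma ker_conj_psd {m n : ℕ} {S : Matrix (Fin n) (Fin n) ℝ} (hS : S.PosSemidef)
    (A : Matrix (Fin m) (Fin n) ℝ) :
    LinearMap.ker (A * S * Aᵀ).mulVecLin
      = Submodule.comap Aᵀ.mulVecLin (LinearMap.ker S.mulVecLin) := by
  ext x
  simp only [LinearMap.mem_ker, Submodule.mem_comap, mulVecLin_apply]
  constructor
  · intro h
    have h1 : x ⬝ᵥ (A * S * Aᵀ) *ᵥ x = 0 := by rw [h, dotProduct_zero]
    have h2 : (Aᵀ *ᵥ x) ⬝ᵥ S *ᵥ (Aᵀ *ᵥ x) = 0 := by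
      rw [← h1, mulVec_transpose, ← mulVec_mulVec, ← mulVec_mulVec, dotProduct_mulVec,
        mulVec_transpose, dotProduct_mulVec, dotProduct_mulVec]
    have := (hS.dotProduct_mulVec_zero_iff (Aᵀ *ᵥ x)).mp (by simpa using h2)
    exact this
  · intro h
    rw [← mulVec_mulVec, ← mulVec_mulVec, h, mulVec_zero]

/-- kernel of a PSD sum. -/
lemma psd_add_ker {n : ℕ} {A B : Matrix (Fin n) (Fin n) ℝ}
    (hA : A.PosSemidef) (hB : B.PosSemidef) {y : Fin n → ℝ}
    (h : (A + B) *ᵥ y = 0) : A *ᵥ y = 0 ∧ B *ᵥ y = 0 := by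
  have h1 : y ⬝ᵥ A *ᵥ y + y ⬝ᵥ B *ᵥ y = 0 := by
    rw [← dotProduct_add, ← add_mulVec, h, dotProduct_zero]
  have ha : (0:ℝ) ≤ y ⬝ᵥ A *ᵥ y := by simpa using hA.dotProduct_mulVec_nonneg y
  have hb : (0:ℝ) ≤ y ⬝ᵥ B *ᵥ y := by simpa using hB.dotProduct_mulVec_nonneg y
  constructor
  · exact (hA.dotProduct_mulVec_zero_iff y).mp (by simp only [star_trivial]; linarith)
  · exact (hB.dotProduct_mulVec_zero_iff y).mp (by simp only [star_trivial]; linarith)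

lemma dotProduct_finset_sum {n : ℕ} {ι : Type*} (s : Finset ι) (x : Fin n → ℝ)
    (f : ι → Fin n → ℝ) : x ⬝ᵥ (∑ i ∈ s, f i) = ∑ i ∈ s, x ⬝ᵥ f i := by
  simp only [dotProduct, Finset.sum_apply, Finset.mul_sum]
  rw [Finset.sum_comm]

/-- an element of the span of an orthonormal family orthogonal to the family is zero. -/
lemma ortho_span_zero {n m : ℕ} {u : Fin m → (Fin n → ℝ)}
    (huu : ∀ k l, u k ⬝ᵥ u l = if k = l then (1 : ℝ) else 0)
    {y : Fin n → ℝ} (hy : y ∈ Submodule.span ℝ (Set.range u))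
    (h : ∀ l, u l ⬝ᵥ y = 0) : y = 0 := by
  obtain ⟨c, rfl⟩ := (Submodule.mem_span_range_iff_exists_fun ℝ).mp hy
  have hc : ∀ l, c l = 0 := by
    intro l
    have := h l
    rw [dotProduct_finset_sum] at this
    simp only [dotProduct_smul, huu, smul_eq_mul] at this
    simpa [mul_ite] using this
  simp [hc]


/-- achievability construction of the paper's Proposition 4, App. D.
With `Φ` built from `M₁` of the vectors `v_k` (completing an orthonormal basis of
`Null(Σ₁)∩Null(Σ₂)` to one of `Null(Σ₁)`) and `M₂` of the vectors `w_k` (similarly for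
`Null(Σ₂)`), one gets `r₁ = M₂`, `r₂ = M₁`, `r₁₂ = M₁+M₂` and `d(1,2) = M/4`. -/
theorem stmt10 {N : ℕ} (rSig : ℕ) (hr1 : 1 ≤ rSig) (hrN : rSig < N)
    (S1 S2 : Matrix (Fin N) (Fin N) ℝ) (hS1 : S1.PosSemidef) (hS2 : S2.PosSemidef)
    (hrank1 : S1.rank = rSig) (hrank2 : S2.rank = rSig)
    (hdim : Module.finrank ℝ
      ↥(LinearMap.ker S1.mulVecLin ⊓ LinearMap.ker S2.mulVecLin) = N - 2 * rSig)
    (u : Fin (N - 2 * rSig) → (Fin N → ℝ))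
    (v w : Fin (min (N - rSig) rSig) → (Fin N → ℝ))
    (huu : ∀ k l, u k ⬝ᵥ u l = if k = l then (1 : ℝ) else 0)
    (hvv : ∀ k l, v k ⬝ᵥ v l = if k = l then (1 : ℝ) else 0)
    (hww : ∀ k l, w k ⬝ᵥ w l = if k = l then (1 : ℝ) else 0)
    (huv : ∀ k l, u k ⬝ᵥ v l = 0)
    (huw : ∀ k l, u k ⬝ᵥ w l = 0)
    (hspan_u : Submodule.span ℝ (Set.range u) =
      LinearMap.ker S1.mulVecLin ⊓ LinearMap.ker S2.mulVecLin)
    (hspan_uv : Submodule.span ℝ (Set.range u ∪ Set.range v) = LinearMap.ker S1.mulVecLin)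
    (hspan_uw : Submodule.span ℝ (Set.range u ∪ Set.range w) = LinearMap.ker S2.mulVecLin)
    (M1 M2 : ℕ) (hM1 : M1 ≤ min (N - rSig) rSig) (hM2 : M2 ≤ min (N - rSig) rSig)
    (hM : 1 ≤ M1 + M2)
    (a : Fin M1 → Fin (min (N - rSig) rSig)) (ha : Function.Injective a)
    (b : Fin M2 → Fin (min (N - rSig) rSig)) (hb : Function.Injective b)
    (Φ : Matrix (Fin (M1 + M2)) (Fin N) ℝ)
    (hΦ : Φ = Matrix.of (Fin.append (fun k => v (a k)) (fun k => w (b k)))) :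
    (Φ * S1 * Φᵀ).rank = M2 ∧ (Φ * S2 * Φᵀ).rank = M1 ∧
    (Φ * (S1 + S2) * Φᵀ).rank = M1 + M2 ∧
    dExp Φ S1 S2 = (M1 + M2 : ℝ) / 4 := by
  -- rows of Φ
  have hrowv : ∀ k : Fin M1, Φ (Fin.castAdd M2 k) = v (a k) := by
    intro k; rw [hΦ]; exact Fin.append_left (fun k => v (a k)) (fun k => w (b k)) k
  have hroww : ∀ k : Fin M2, Φ (Fin.natAdd M1 k) = w (b k) := by
    intro k; rw [hΦ]; exact Fin.append_right (fun k => v (a k)) (fun k => w (b k)) k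
  have hsum : ∀ x : Fin (M1 + M2) → ℝ, Φᵀ *ᵥ x =
      (∑ k : Fin M1, x (Fin.castAdd M2 k) • v (a k))
      + ∑ k : Fin M2, x (Fin.natAdd M1 k) • w (b k) := by
    intro x
    have h0 : Φᵀ *ᵥ x = ∑ i : Fin (M1 + M2), x i • Φ i := by
      ext j
      simp [mulVec, dotProduct, transpose_apply, Finset.sum_apply, mul_comm]
    rw [h0, Fin.sum_univ_add]
    simp only [hrowv, hroww]
  -- kernel memberships of the basis vectors
  have hu1 : ∀ k, u k ∈ LinearMap.ker S1.mulVecLin := fun k =>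
    hspan_uv ▸ Submodule.subset_span (Or.inl ⟨k, rfl⟩)
  have hv1 : ∀ k, v k ∈ LinearMap.ker S1.mulVecLin := fun k =>
    hspan_uv ▸ Submodule.subset_span (Or.inr ⟨k, rfl⟩)
  have hw2 : ∀ k, w k ∈ LinearMap.ker S2.mulVecLin := fun k =>
    hspan_uw ▸ Submodule.subset_span (Or.inr ⟨k, rfl⟩)
  -- the two kernel characterizations
  have key1 : ∀ x : Fin (M1 + M2) → ℝ,
      Φᵀ *ᵥ x ∈ LinearMap.ker S1.mulVecLin ↔ ∀ j : Fin M2, x (Fin.natAdd M1 j) = 0 := by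
    intro x
    constructor
    · intro hx j'
      set yw : Fin N → ℝ := ∑ k : Fin M2, x (Fin.natAdd M1 k) • w (b k) with hyw
      have hyvmem : (∑ k : Fin M1, x (Fin.castAdd M2 k) • v (a k))
          ∈ LinearMap.ker S1.mulVecLin :=
        Submodule.sum_mem _ fun k _ => Submodule.smul_mem _ _ (hv1 _)
      have hywmem2 : yw ∈ LinearMap.ker S2.mulVecLin :=
        Submodule.sum_mem _ fun k _ => Submodule.smul_mem _ _ (hw2 _)
      have hywmem1 : yw ∈ LinearMap.ker S1.mulVecLin := by
        have heq : yw = Φᵀ *ᵥ x - ∑ k : Fin M1, x (Fin.castAdd M2 k) • v (a k) := by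
          rw [hsum x]; abel
        rw [heq]; exact Submodule.sub_mem _ hx hyvmem
      have hyu : yw ∈ Submodule.span ℝ (Set.range u) := by
        rw [hspan_u]; exact ⟨hywmem1, hywmem2⟩
      have hperp : ∀ l, u l ⬝ᵥ yw = 0 := by
        intro l
        rw [hyw, dotProduct_finset_sum]
        simp [dotProduct_smul, huw]
      have h0 : yw = 0 := ortho_span_zero huu hyu hperp
      have hco : w (b j') ⬝ᵥ yw = x (Fin.natAdd M1 j') := by
        rw [hyw, dotProduct_finset_sum]
        simp [dotProduct_smul, hww, hb.eq_iff, mul_ite]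
      rw [h0, dotProduct_zero] at hco
      exact hco.symm
    · intro hx
      rw [hsum x]
      have hz : (∑ k : Fin M2, x (Fin.natAdd M1 k) • w (b k)) = 0 := by
        simp [hx]
      rw [hz, add_zero]
      exact Submodule.sum_mem _ fun k _ => Submodule.smul_mem _ _ (hv1 _)
  have key2 : ∀ x : Fin (M1 + M2) → ℝ,
      Φᵀ *ᵥ x ∈ LinearMap.ker S2.mulVecLin ↔ ∀ j : Fin M1, x (Fin.castAdd M2 j) = 0 := by
    intro x
    constructor
    · intro hx j'
      set yv : Fin N → ℝ := ∑ k : Fin M1, x (Fin.castAdd M2 k) • v (a k) with hyv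
      have hyv1 : yv ∈ LinearMap.ker S1.mulVecLin :=
        Submodule.sum_mem _ fun k _ => Submodule.smul_mem _ _ (hv1 _)
      have hywmem : (∑ k : Fin M2, x (Fin.natAdd M1 k) • w (b k))
          ∈ LinearMap.ker S2.mulVecLin :=
        Submodule.sum_mem _ fun k _ => Submodule.smul_mem _ _ (hw2 _)
      have hyv2 : yv ∈ LinearMap.ker S2.mulVecLin := by
        have heq : yv = Φᵀ *ᵥ x - ∑ k : Fin M2, x (Fin.natAdd M1 k) • w (b k) := by
          rw [hsum x]; abel
        rw [heq]; exact Submodule.sub_mem _ hx hywmem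
      have hyu : yv ∈ Submodule.span ℝ (Set.range u) := by
        rw [hspan_u]; exact ⟨hyv1, hyv2⟩
      have hperp : ∀ l, u l ⬝ᵥ yv = 0 := by
        intro l
        rw [hyv, dotProduct_finset_sum]
        simp [dotProduct_smul, huv]
      have h0 : yv = 0 := ortho_span_zero huu hyu hperp
      have hco : v (a j') ⬝ᵥ yv = x (Fin.castAdd M2 j') := by
        rw [hyv, dotProduct_finset_sum]
        simp [dotProduct_smul, hvv, ha.eq_iff, mul_ite]
      rw [h0, dotProduct_zero] at hco
      exact hco.symm
    · intro hx
      rw [hsum x]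
      have hz : (∑ k : Fin M1, x (Fin.castAdd M2 k) • v (a k)) = 0 := by
        simp [hx]
      rw [hz, zero_add]
      exact Submodule.sum_mem _ fun k _ => Submodule.smul_mem _ _ (hw2 _)
  -- membership in ker of funLeft
  have hmem1 : ∀ x : Fin (M1 + M2) → ℝ,
      x ∈ LinearMap.ker (LinearMap.funLeft ℝ ℝ (Fin.natAdd M1)) ↔
        ∀ j : Fin M2, x (Fin.natAdd M1 j) = 0 := by
    intro x
    simp [LinearMap.mem_ker, LinearMap.funLeft_apply, funext_iff, Function.comp]
  have hmem2 : ∀ x : Fin (M1 + M2) → ℝ,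
      x ∈ LinearMap.ker (LinearMap.funLeft ℝ ℝ (Fin.castAdd M2)) ↔
        ∀ j : Fin M1, x (Fin.castAdd M2 j) = 0 := by
    intro x
    simp [LinearMap.mem_ker, LinearMap.funLeft_apply, funext_iff, Function.comp]
  -- kernel identifications
  have hker1 : LinearMap.ker (Φ * S1 * Φᵀ).mulVecLin
      = LinearMap.ker (LinearMap.funLeft ℝ ℝ (Fin.natAdd M1)) := by
    rw [ker_conj_psd hS1]
    ext x
    rw [Submodule.mem_comap, mulVecLin_apply, key1 x, hmem1 x]
  have hker2 : LinearMap.ker (Φ * S2 * Φᵀ).mulVecLin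
      = LinearMap.ker (LinearMap.funLeft ℝ ℝ (Fin.castAdd M2)) := by
    rw [ker_conj_psd hS2]
    ext x
    rw [Submodule.mem_comap, mulVecLin_apply, key2 x, hmem2 x]
  have hker12 : LinearMap.ker (Φ * (S1 + S2) * Φᵀ).mulVecLin = ⊥ := by
    rw [ker_conj_psd (hS1.add hS2), Submodule.eq_bot_iff]
    intro x hx
    rw [Submodule.mem_comap, mulVecLin_apply, LinearMap.mem_ker, mulVecLin_apply] at hx
    obtain ⟨h1, h2⟩ := psd_add_ker hS1 hS2 hx
    have h1' : Φᵀ *ᵥ x ∈ LinearMap.ker S1.mulVecLin := h1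
    have h2' : Φᵀ *ᵥ x ∈ LinearMap.ker S2.mulVecLin := h2
    have c1 := (key1 x).mp h1'
    have c2 := (key2 x).mp h2'
    funext i
    refine Fin.addCases (fun j => ?_) (fun j => ?_) i
    · exact c2 j
    · exact c1 j
  -- finrank of the funLeft kernels
  have hnatAdd_inj : Function.Injective (Fin.natAdd M1 : Fin M2 → Fin (M1 + M2)) := by
    intro i j h
    have := congrArg Fin.val h
    simp only [Fin.coe_natAdd] at this
    exact Fin.ext (by omega)
  have hfl1 : Module.finrank ℝ (LinearMap.ker
      (LinearMap.funLeft ℝ ℝ (Fin.natAdd M1) : (Fin (M1 + M2) → ℝ) →ₗ[ℝ] (Fin M2 → ℝ))) = M1 := by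
    have hsurj := LinearMap.funLeft_surjective_of_injective ℝ ℝ _ hnatAdd_inj
    have h := LinearMap.finrank_range_add_finrank_ker
      (LinearMap.funLeft ℝ ℝ (Fin.natAdd M1) : (Fin (M1 + M2) → ℝ) →ₗ[ℝ] (Fin M2 → ℝ))
    rw [LinearMap.range_eq_top.mpr hsurj, finrank_top, Module.finrank_fin_fun,
      Module.finrank_fin_fun] at h
    omega
  have hfl2 : Module.finrank ℝ (LinearMap.ker
      (LinearMap.funLeft ℝ ℝ (Fin.castAdd M2) : (Fin (M1 + M2) → ℝ) →ₗ[ℝ] (Fin M1 → ℝ))) = M2 := by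
    have hsurj := LinearMap.funLeft_surjective_of_injective ℝ ℝ _ (Fin.castAdd_injective M1 M2)
    have h := LinearMap.finrank_range_add_finrank_ker
      (LinearMap.funLeft ℝ ℝ (Fin.castAdd M2) : (Fin (M1 + M2) → ℝ) →ₗ[ℝ] (Fin M1 → ℝ))
    rw [LinearMap.range_eq_top.mpr hsurj, finrank_top, Module.finrank_fin_fun,
      Module.finrank_fin_fun] at h
    omega
  -- the three ranks
  have r1 : (Φ * S1 * Φᵀ).rank = M2 := by
    have h := LinearMap.finrank_range_add_finrank_ker (Φ * S1 * Φᵀ).mulVecLin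
    rw [hker1, hfl1, Module.finrank_fin_fun] at h
    have hr : (Φ * S1 * Φᵀ).rank
        = Module.finrank ℝ (LinearMap.range (Φ * S1 * Φᵀ).mulVecLin) := rfl
    omega
  have r2 : (Φ * S2 * Φᵀ).rank = M1 := by
    have h := LinearMap.finrank_range_add_finrank_ker (Φ * S2 * Φᵀ).mulVecLin
    rw [hker2, hfl2, Module.finrank_fin_fun] at h
    have hr : (Φ * S2 * Φᵀ).rank
        = Module.finrank ℝ (LinearMap.range (Φ * S2 * Φᵀ).mulVecLin) := rfl
    omega
  have r12 : (Φ * (S1 + S2) * Φᵀ).rank = M1 + M2 := by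
    have h := LinearMap.finrank_range_add_finrank_ker (Φ * (S1 + S2) * Φᵀ).mulVecLin
    rw [hker12, finrank_bot, Module.finrank_fin_fun] at h
    have hr : (Φ * (S1 + S2) * Φᵀ).rank
        = Module.finrank ℝ (LinearMap.range (Φ * (S1 + S2) * Φᵀ).mulVecLin) := rfl
    omega
  refine ⟨r1, r2, r12, ?_⟩
  simp only [dExp, r1, r2, r12]
  push_cast
  ring
end

section
/- For any real M×N matrix Φ and any real symmetric positive semidefinite N×N matrices Σ_1 and Σ_2, rank(Φ(Σ_1+Σ_2)Φᵀ) − rank(ΦΣ_1Φᵀ) ≤ rank(Σ_1+Σ_2) − rank(Σ_1), and symmetrically rank(Φ(Σ_1+Σ_2)Φᵀ) − rank(ΦΣ_2Φᵀ) ≤ rank(Σ_1+Σ_2) − rank(Σ_2). (Key rank inequality from Appendix B of the paper, proved via the generalized eigenvalue decomposition; it implies that the decay exponent d(1,2) never exceeds R/4 = (2·rank(Σ_1+Σ_2) − rank(Σ_1) − rank(Σ_2))/4.) -/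
open Matrix Filter Topology
open scoped Classical

open Module in
lemma finrank_map_inf_ker {V V' : Type*} [AddCommGroup V] [Module ℝ V] [AddCommGroup V']
    [Module ℝ V'] [FiniteDimensional ℝ V] (f : V →ₗ[ℝ] V') (p : Submodule ℝ V) :
    finrank ℝ (p.map f) + finrank ℝ (p ⊓ LinearMap.ker f : Submodule ℝ V) = finrank ℝ p := by
  have h := LinearMap.finrank_range_add_finrank_ker (f.domRestrict p)
  rw [LinearMap.range_domRestrict, LinearMap.ker_domRestrict] at h
  rw [← h, ← Submodule.finrank_map_subtype_eq p (Submodule.comap p.subtype (LinearMap.ker f)),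
    Submodule.map_comap_subtype]

open Module in
lemma rank_mul_ineq {l m p q : Type*} [Fintype m] [Fintype p] [Fintype q]
    (Φ : Matrix l m ℝ) (A : Matrix m p ℝ) (B : Matrix m q ℝ)
    (h : LinearMap.range B.mulVecLin ≤ LinearMap.range A.mulVecLin) :
    (Φ * A).rank + B.rank ≤ A.rank + (Φ * B).rank := by
  set f := Φ.mulVecLin
  set W := LinearMap.range A.mulVecLin
  set U := LinearMap.range B.mulVecLin
  have hA : (Φ * A).rank = finrank ℝ (W.map f) := by
    rw [Matrix.rank, mulVecLin_mul, LinearMap.range_comp]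
  have hB : (Φ * B).rank = finrank ℝ (U.map f) := by
    rw [Matrix.rank, mulVecLin_mul, LinearMap.range_comp]
  have e1 := finrank_map_inf_ker f W
  have e2 := finrank_map_inf_ker f U
  have mono : finrank ℝ (U ⊓ LinearMap.ker f : Submodule ℝ _) ≤
      finrank ℝ (W ⊓ LinearMap.ker f : Submodule ℝ _) :=
    Submodule.finrank_mono (inf_le_inf_right _ h)
  have hArank : A.rank = finrank ℝ W := rfl
  have hBrank : B.rank = finrank ℝ U := rfl
  rw [hA, hB, hArank, hBrank]
  omega

open scoped MatrixOrder in
lemma key_rank_ineq {M N : ℕ} (Φ : Matrix (Fin M) (Fin N) ℝ)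
    (S1 S2 : Matrix (Fin N) (Fin N) ℝ) (h1 : S1.PosSemidef) (h2 : S2.PosSemidef) :
    (Φ * (S1 + S2) * Φᵀ).rank + S1.rank ≤ (S1 + S2).rank + (Φ * S1 * Φᵀ).rank := by
  set R1 := CFC.sqrt S1 with hR1def
  set R2 := CFC.sqrt S2 with hR2def
  have hR1t : R1ᵀ = R1 := by
    rw [← conjTranspose_eq_transpose_of_trivial]; exact (CFC.sqrt_nonneg S1).isSelfAdjoint
  have hR2t : R2ᵀ = R2 := by
    rw [← conjTranspose_eq_transpose_of_trivial]; exact (CFC.sqrt_nonneg S2).isSelfAdjoint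
  have hs1 : R1 * R1 = S1 := CFC.sqrt_mul_sqrt_self _ h1.nonneg
  have hs2 : R2 * R2 = S2 := CFC.sqrt_mul_sqrt_self _ h2.nonneg
  set A := fromCols R1 R2 with hAdef
  have hAt : Aᵀ = fromRows R1 R2 := by rw [hAdef, transpose_fromCols, hR1t, hR2t]
  have hAAt : A * Aᵀ = S1 + S2 := by
    rw [hAt, hAdef, fromCols_mul_fromRows, hs1, hs2]
  -- rank (S1+S2) = rank A
  have r1 : (S1 + S2).rank = A.rank := by rw [← hAAt, rank_self_mul_transpose]
  -- rank S1 = rank R1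
  have r2 : S1.rank = R1.rank := by
    rw [← hs1]; nth_rewrite 2 [← hR1t]; exact rank_self_mul_transpose R1
  -- Φ (S1+S2) Φᵀ = (Φ A)(Φ A)ᵀ
  have r3 : (Φ * (S1 + S2) * Φᵀ).rank = (Φ * A).rank := by
    have : Φ * (S1 + S2) * Φᵀ = (Φ * A) * (Φ * A)ᵀ := by
      rw [transpose_mul, ← hAAt]; simp [Matrix.mul_assoc]
    rw [this, rank_self_mul_transpose]
  have r4 : (Φ * S1 * Φᵀ).rank = (Φ * R1).rank := by
    have : Φ * S1 * Φᵀ = (Φ * R1) * (Φ * R1)ᵀ := by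
      rw [transpose_mul, hR1t, ← hs1]; simp [Matrix.mul_assoc]
    rw [this, rank_self_mul_transpose]
  have hrange : LinearMap.range R1.mulVecLin ≤ LinearMap.range A.mulVecLin := by
    rintro y ⟨v, rfl⟩
    exact ⟨Sum.elim v 0, by simp [hAdef, fromCols_mulVec_sumElim]⟩
  have := rank_mul_ineq Φ A R1 hrange
  omega

/-- key rank inequality, Appendix B of the paper. For any `Φ` and PSD
`Σ₁, Σ₂`: `rank(Φ(Σ₁+Σ₂)Φᵀ) − rank(ΦΣ₁Φᵀ) ≤ rank(Σ₁+Σ₂) − rank(Σ₁)`, and symmetrically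
for `Σ₂`. -/

theorem stmt11 {M N : ℕ} (Φ : Matrix (Fin M) (Fin N) ℝ)
    (S1 S2 : Matrix (Fin N) (Fin N) ℝ) (h1 : S1.PosSemidef) (h2 : S2.PosSemidef) :
    ((Φ * (S1 + S2) * Φᵀ).rank : ℤ) - ((Φ * S1 * Φᵀ).rank : ℤ) ≤
      ((S1 + S2).rank : ℤ) - (S1.rank : ℤ) ∧
    ((Φ * (S1 + S2) * Φᵀ).rank : ℤ) - ((Φ * S2 * Φᵀ).rank : ℤ) ≤
      ((S1 + S2).rank : ℤ) - (S2.rank : ℤ) := by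
  have k1 := key_rank_ineq Φ S1 S2 h1 h2
  have k2 := key_rank_ineq Φ S2 S1 h2 h1
  rw [add_comm S2 S1] at k2
  constructor <;> omega
end

section
/- For any real M×N matrix Φ and any real symmetric positive semidefinite N×N matrices Σ_1 and Σ_2, 2·rank(Φ(Σ_1+Σ_2)Φᵀ) − rank(ΦΣ_1Φᵀ) − rank(ΦΣ_2Φᵀ) ≤ min{ M, 2·rank(Σ_1+Σ_2) − rank(Σ_1) − rank(Σ_2) }. Equivalently, the low-noise decay exponent d(1,2) = (2r_{12} − r_1 − r_2)/4 of the two-class Bhattacharyya bound satisfies d(1,2) ≤ min{M, R}/4 with R = 2·rank(Σ_1+Σ_2) − rank(Σ_1) − rank(Σ_2), for every choice of the M-row measurement matrix Φ. (Converse part of the paper's Proposition 4, Appendices B and D.) -/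
open Matrix Filter Topology
open scoped Classical

section StmtAux
open Module
open scoped MatrixOrder

set_option synthInstance.maxHeartbeats 1000000 in
lemma aux_rn {N M : ℕ} (f : (Fin N → ℝ) →ₗ[ℝ] (Fin M → ℝ)) (W : Submodule ℝ (Fin N → ℝ)) :
    finrank ℝ (W.map f) + finrank ℝ ↥(LinearMap.ker f ⊓ W) = finrank ℝ W := by
  have h := LinearMap.finrank_range_add_finrank_ker (f.domRestrict W)
  rw [LinearMap.range_domRestrict] at h
  rw [← h]
  congr 1
  have : LinearMap.ker (f.domRestrict W) = Submodule.comap W.subtype (LinearMap.ker f ⊓ W) := by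
    rw [LinearMap.ker_domRestrict]
    simp [Submodule.comap_inf]
  rw [this]
  exact ((Submodule.comapSubtypeEquivOfLe (inf_le_right : LinearMap.ker f ⊓ W ≤ W)).finrank_eq).symm

lemma aux_main {M N : ℕ} (Φ : Matrix (Fin M) (Fin N) ℝ)
    (S1 S2 : Matrix (Fin N) (Fin N) ℝ) (h1 : S1.PosSemidef) (h2 : S2.PosSemidef) :
    2 * ((Φ * (S1 + S2) * Φᵀ).rank : ℤ) - ((Φ * S1 * Φᵀ).rank : ℤ) -
        ((Φ * S2 * Φᵀ).rank : ℤ) ≤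
      min (M : ℤ) (2 * ((S1 + S2).rank : ℤ) - (S1.rank : ℤ) - (S2.rank : ℤ)) := by
  set A1 := CFC.sqrt S1 with hA1
  set A2 := CFC.sqrt S2 with hA2
  have hA1t : A1ᵀ = A1 := by
    have h := (CFC.sqrt_nonneg S1).posSemidef.1
    rwa [Matrix.IsHermitian, conjTranspose_eq_transpose_of_trivial] at h
  have hA2t : A2ᵀ = A2 := by
    have h := (CFC.sqrt_nonneg S2).posSemidef.1
    rwa [Matrix.IsHermitian, conjTranspose_eq_transpose_of_trivial] at h
  have hs1 : A1 * A1 = S1 := CFC.sqrt_mul_sqrt_self S1 h1.nonneg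
  have hs2 : A2 * A2 = S2 := CFC.sqrt_mul_sqrt_self S2 h2.nonneg
  set C : Matrix (Fin N) (Fin N ⊕ Fin N) ℝ := fromCols A1 A2 with hC
  have hCCt : C * Cᵀ = S1 + S2 := by
    rw [hC, transpose_fromCols, fromCols_mul_fromRows, hA1t, hA2t, hs1, hs2]
  -- rank identities
  have e1 : (Φ * S1 * Φᵀ).rank = (Φ * A1).rank := by
    have : Φ * S1 * Φᵀ = (Φ * A1) * (Φ * A1)ᵀ := by
      rw [transpose_mul, hA1t, ← hs1]; simp only [Matrix.mul_assoc]
    rw [this, rank_self_mul_transpose]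
  have e2 : (Φ * S2 * Φᵀ).rank = (Φ * A2).rank := by
    have : Φ * S2 * Φᵀ = (Φ * A2) * (Φ * A2)ᵀ := by
      rw [transpose_mul, hA2t, ← hs2]; simp only [Matrix.mul_assoc]
    rw [this, rank_self_mul_transpose]
  have e12 : (Φ * (S1 + S2) * Φᵀ).rank = (Φ * C).rank := by
    have : Φ * (S1 + S2) * Φᵀ = (Φ * C) * (Φ * C)ᵀ := by
      rw [transpose_mul, ← hCCt]; simp only [Matrix.mul_assoc]
    rw [this, rank_self_mul_transpose]
  have E1 : S1.rank = A1.rank := by rw [← hs1, ← hA1t]; nth_rewrite 2 [← hA1t]; exact rank_self_mul_transpose _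
  have E2 : S2.rank = A2.rank := by rw [← hs2, ← hA2t]; nth_rewrite 2 [← hA2t]; exact rank_self_mul_transpose _
  have E12 : (S1 + S2).rank = C.rank := by rw [← hCCt]; exact rank_self_mul_transpose _
  -- linear algebra
  set f := Φ.mulVecLin with hf
  set V1 := LinearMap.range A1.mulVecLin with hV1
  set V2 := LinearMap.range A2.mulVecLin with hV2
  set V := LinearMap.range C.mulVecLin with hV
  have hr1 : (Φ * A1).rank = finrank ℝ (V1.map f) := by
    rw [Matrix.rank, mulVecLin_mul, LinearMap.range_comp]
  have hr2 : (Φ * A2).rank = finrank ℝ (V2.map f) := by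
    rw [Matrix.rank, mulVecLin_mul, LinearMap.range_comp]
  have hr12 : (Φ * C).rank = finrank ℝ (V.map f) := by
    rw [Matrix.rank, mulVecLin_mul, LinearMap.range_comp]
  have hV1V : V1 ≤ V := by
    rintro x ⟨y, rfl⟩
    exact ⟨Sum.elim y 0, by simp [hC, mulVecLin_apply]⟩
  have hV2V : V2 ≤ V := by
    rintro x ⟨y, rfl⟩
    exact ⟨Sum.elim 0 y, by simp [hC, mulVecLin_apply]⟩
  have hVsup : V ≤ V1 ⊔ V2 := by
    rintro x ⟨y, rfl⟩
    have hy : C.mulVecLin y = A1.mulVec (y ∘ Sum.inl) + A2.mulVec (y ∘ Sum.inr) := by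
      rw [mulVecLin_apply]
      have hysplit : y = Sum.elim (y ∘ Sum.inl) (y ∘ Sum.inr) := by ext (i|i) <;> rfl
      conv_lhs => rw [hysplit]
      rw [hC, fromCols_mulVec_sumElim]
    rw [hy]
    exact Submodule.add_mem _ (Submodule.mem_sup_left ⟨_, rfl⟩) (Submodule.mem_sup_right ⟨_, rfl⟩)
  -- rank-nullity facts
  have k1 := aux_rn f V1
  have k2 := aux_rn f V2
  have k12 := aux_rn f V
  have mono1 : finrank ℝ ↥(LinearMap.ker f ⊓ V1) ≤ finrank ℝ ↥(LinearMap.ker f ⊓ V) :=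
    Submodule.finrank_mono (inf_le_inf_left _ hV1V)
  have mono2 : finrank ℝ ↥(LinearMap.ker f ⊓ V2) ≤ finrank ℝ ↥(LinearMap.ker f ⊓ V) :=
    Submodule.finrank_mono (inf_le_inf_left _ hV2V)
  -- subadditivity: r12 ≤ r1 + r2
  have hsub : finrank ℝ (V.map f) ≤ finrank ℝ (V1.map f) + finrank ℝ (V2.map f) := by
    calc finrank ℝ (V.map f) ≤ finrank ℝ ((V1 ⊔ V2).map f) :=
          Submodule.finrank_mono (Submodule.map_mono hVsup)
      _ = finrank ℝ ↥(V1.map f ⊔ V2.map f) := by rw [Submodule.map_sup]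
      _ ≤ finrank ℝ (V1.map f) + finrank ℝ (V2.map f) := by
          have h := Submodule.finrank_sup_add_finrank_inf_eq (Submodule.map f V1) (Submodule.map f V2)
          omega
  have hM : (Φ * (S1 + S2) * Φᵀ).rank ≤ M := by
    simpa using rank_le_card_height (Φ * (S1 + S2) * Φᵀ)
  -- finrank of ranks of Mats
  have RA1 : A1.rank = finrank ℝ V1 := rfl
  have RA2 : A2.rank = finrank ℝ V2 := rfl
  have RC : C.rank = finrank ℝ V := rfl
  rw [e1, e2, e12, E1, E2, E12, hr1, hr2, hr12, RA1, RA2, RC] at *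
  omega

end StmtAux

/-- converse part of the paper's Proposition 4, Appendices B and D.
For any `M`-row measurement matrix `Φ` and PSD `Σ₁, Σ₂`:
`2r₁₂ − r₁ − r₂ ≤ min{M, 2·rank(Σ₁+Σ₂) − rank(Σ₁) − rank(Σ₂)}`; equivalently
`d(1,2) ≤ min{M, R}/4` with `R = 2·rank(Σ₁+Σ₂) − rank(Σ₁) − rank(Σ₂)`. -/

theorem stmt12 {M N : ℕ} (Φ : Matrix (Fin M) (Fin N) ℝ)
    (S1 S2 : Matrix (Fin N) (Fin N) ℝ) (h1 : S1.PosSemidef) (h2 : S2.PosSemidef) :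
    2 * ((Φ * (S1 + S2) * Φᵀ).rank : ℤ) - ((Φ * S1 * Φᵀ).rank : ℤ) -
        ((Φ * S2 * Φᵀ).rank : ℤ) ≤
      min (M : ℤ) (2 * ((S1 + S2).rank : ℤ) - (S1.rank : ℤ) - (S2.rank : ℤ)) ∧
    dExp Φ S1 S2 ≤
      min (M : ℝ) (2 * ((S1 + S2).rank : ℝ) - (S1.rank : ℝ) - (S2.rank : ℝ)) / 4 := by
  have h := aux_main Φ S1 S2 h1 h2
  refine ⟨h, ?_⟩
  have h' : 2 * ((Φ * (S1 + S2) * Φᵀ).rank : ℝ) - ((Φ * S1 * Φᵀ).rank : ℝ) -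
      ((Φ * S2 * Φᵀ).rank : ℝ) ≤
      min (M : ℝ) (2 * ((S1 + S2).rank : ℝ) - (S1.rank : ℝ) - (S2.rank : ℝ)) := by
    exact_mod_cast h
  rw [dExp]
  gcongr
end

section
/- Let Σ_1, Σ_2 be real symmetric positive semidefinite N×N matrices and let w_1,…,w_m ∈ ℝ^N be linearly independent vectors lying in Null(Σ_2), each orthogonal to the subspace Null(Σ_1) ∩ Null(Σ_2). Then the vectors Σ_1^{1/2}w_1,…,Σ_1^{1/2}w_m are linearly independent; equivalently, the Gram matrix Q = WᵀΣ_1W (where W = [w_1,…,w_m]) has rank m, i.e., is invertible. (Key lemma in the achievability proof of the paper's Proposition 4, Appendix D.) -/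
open Matrix Filter Topology
open scoped Classical

private lemma mulVecSum {n m : ℕ} (A : Matrix (Fin n) (Fin n) ℝ) (c : Fin m → ℝ)
    (w : Fin m → Fin n → ℝ) :
    A *ᵥ (∑ k, c k • w k) = ∑ k, c k • (A *ᵥ w k) := by
  ext i
  simp only [Matrix.mulVec, dotProduct, Finset.sum_apply, Pi.smul_apply,
    smul_eq_mul, Finset.mul_sum]
  rw [Finset.sum_comm]
  exact Finset.sum_congr rfl fun k _ => Finset.sum_congr rfl fun j _ => by ring

private lemma sumDot {n m : ℕ} (f : Fin m → Fin n → ℝ) (v : Fin n → ℝ) :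
    (∑ k, f k) ⬝ᵥ v = ∑ k, f k ⬝ᵥ v := by
  simp only [dotProduct, Finset.sum_apply, Finset.sum_mul]
  exact Finset.sum_comm

private lemma dotSum {n m : ℕ} (v : Fin n → ℝ) (f : Fin m → Fin n → ℝ) :
    v ⬝ᵥ (∑ k, f k) = ∑ k, v ⬝ᵥ f k := by
  simp only [dotProduct, Finset.sum_apply, Finset.mul_sum]
  exact Finset.sum_comm

/-- key lemma of Appendix D of the paper. If `w₁,…,w_m` are linearly
independent vectors of `Null(Σ₂)`, each orthogonal to `Null(Σ₁) ∩ Null(Σ₂)`, then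
`Σ₁^{1/2}w₁,…,Σ₁^{1/2}w_m` are linearly independent; equivalently the Gram matrix
`Q = WᵀΣ₁W` has rank `m`, i.e. is invertible. -/
theorem stmt13 {N m : ℕ} (S1 S2 : Matrix (Fin N) (Fin N) ℝ)
    (h1 : S1.PosSemidef) (h2 : S2.PosSemidef)
    (w : Fin m → (Fin N → ℝ)) (hw : LinearIndependent ℝ w)
    (hw2 : ∀ k, S2 *ᵥ w k = 0)
    (horth : ∀ k, ∀ x : Fin N → ℝ, S1 *ᵥ x = 0 → S2 *ᵥ x = 0 → w k ⬝ᵥ x = 0) :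
    LinearIndependent ℝ (fun k => ((h1.1.eigenvectorUnitary : Matrix (Fin N) (Fin N) ℝ) *
      diagonal ((↑) ∘ Real.sqrt ∘ h1.1.eigenvalues) *
      (star h1.1.eigenvectorUnitary : Matrix (Fin N) (Fin N) ℝ)) *ᵥ w k) ∧
    (Matrix.of (fun k l => w k ⬝ᵥ (S1 *ᵥ w l)) : Matrix (Fin m) (Fin m) ℝ).rank = m ∧
    IsUnit (Matrix.of (fun k l => w k ⬝ᵥ (S1 *ᵥ w l)) : Matrix (Fin m) (Fin m) ℝ).det := by
  set R : Matrix (Fin N) (Fin N) ℝ := (h1.1.eigenvectorUnitary : Matrix (Fin N) (Fin N) ℝ) *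
      diagonal ((↑) ∘ Real.sqrt ∘ h1.1.eigenvalues) *
      (star h1.1.eigenvectorUnitary : Matrix (Fin N) (Fin N) ℝ) with hR
  have hsqrtH : Rᵀ = R := by
    rw [← conjTranspose_eq_transpose_of_trivial, hR]
    simp only [conjTranspose_mul, star_eq_conjTranspose, conjTranspose_conjTranspose,
      diagonal_conjTranspose, star_trivial, Matrix.mul_assoc]
  have hRR : R * R = S1 := by
    have hU : (star h1.1.eigenvectorUnitary : Matrix (Fin N) (Fin N) ℝ) *
        (h1.1.eigenvectorUnitary : Matrix (Fin N) (Fin N) ℝ) = 1 := by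
      simp
    conv_rhs => rw [h1.1.spectral_theorem]
    rw [hR, show ∀ A B C D E F : Matrix (Fin N) (Fin N) ℝ, A * B * C * (D * E * F) = A * (B * (C * D) * E) * F
      from fun A B C D E F => by simp only [Matrix.mul_assoc], hU, Matrix.mul_one, diagonal_mul_diagonal]
    congr 3
    funext i
    simp only [Function.comp_apply]
    have := h1.eigenvalues_nonneg i
    rw [Real.mul_self_sqrt this]
    rfl
  have hself : ∀ v : Fin N → ℝ, v ⬝ᵥ (S1 *ᵥ v) = (R *ᵥ v) ⬝ᵥ (R *ᵥ v) := by
    intro v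
    have hvm : v ᵥ* R = R *ᵥ v := by
      rw [← Matrix.vecMul_transpose, hsqrtH]
    rw [show S1 *ᵥ v = R *ᵥ (R *ᵥ v) by
        rw [Matrix.mulVec_mulVec, hRR],
      Matrix.dotProduct_mulVec, hvm]
  -- key: if sqrt *ᵥ (∑ c k • w k) = 0 then c = 0
  have key : ∀ c : Fin m → ℝ, R *ᵥ (∑ k, c k • w k) = 0 → ∀ k, c k = 0 := by
    intro c hc
    set v : Fin N → ℝ := ∑ k, c k • w k with hv
    have hS1v : S1 *ᵥ v = 0 := by
      have : S1 *ᵥ v = R *ᵥ (R *ᵥ v) := by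
        rw [Matrix.mulVec_mulVec, hRR]
      rw [this, hc, Matrix.mulVec_zero]
    have hS2v : S2 *ᵥ v = 0 := by
      rw [hv, mulVecSum]
      simp [hw2]
    have hdot : ∀ k, w k ⬝ᵥ v = 0 := fun k => horth k v hS1v hS2v
    have hvv : v ⬝ᵥ v = 0 := by
      nth_rewrite 1 [hv]
      rw [sumDot]
      simp only [smul_dotProduct, hdot, smul_zero, Finset.sum_const_zero]
    have hv0 : v = 0 := dotProduct_self_eq_zero.mp hvv
    exact Fintype.linearIndependent_iff.mp hw c (by rw [← hv, hv0])
  have hli : LinearIndependent ℝ (fun k => R *ᵥ w k) := by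
    rw [Fintype.linearIndependent_iff]
    intro c hc
    apply key
    rw [mulVecSum]
    exact hc
  refine ⟨hli, ?_⟩
  set Q : Matrix (Fin m) (Fin m) ℝ :=
    Matrix.of (fun k l => w k ⬝ᵥ (S1 *ᵥ w l)) with hQ
  have hdet : Q.det ≠ 0 := by
    intro hdet0
    obtain ⟨c, hc0, hQc⟩ := Matrix.exists_mulVec_eq_zero_iff.mpr hdet0
    have hcQc : c ⬝ᵥ (Q *ᵥ c) = 0 := by rw [hQc, dotProduct_zero]
    set v : Fin N → ℝ := ∑ k, c k • w k with hv
    have hexp : v ⬝ᵥ (S1 *ᵥ v) = c ⬝ᵥ (Q *ᵥ c) := by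
      have hS1v : S1 *ᵥ v = ∑ l, c l • (S1 *ᵥ w l) := by rw [hv, mulVecSum]
      rw [hS1v, dotSum]
      have step : ∀ l, v ⬝ᵥ (c l • (S1 *ᵥ w l)) = c l * ∑ k, c k * (Q k l) := by
        intro l
        rw [dotProduct_smul, hv, sumDot]
        simp only [smul_dotProduct, smul_eq_mul, hQ, Matrix.of_apply]
      simp only [step]
      simp only [dotProduct, Matrix.mulVec, Finset.mul_sum]
      rw [Finset.sum_comm]
      exact Finset.sum_congr rfl fun l _ => Finset.sum_congr rfl fun k _ => by ring
    have hvs : (R *ᵥ v) ⬝ᵥ (R *ᵥ v) = 0 := by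
      rw [← hself, hexp, hcQc]
    have hsv0 : R *ᵥ v = 0 := dotProduct_self_eq_zero.mp hvs
    have : ∀ k, c k = 0 := key c (by rw [← hv]; exact hsv0)
    exact hc0 (funext this)
  have hunit : IsUnit Q.det := isUnit_iff_ne_zero.mpr hdet
  have hQu : IsUnit Q := (Matrix.isUnit_iff_isUnit_det Q).mpr hunit
  exact ⟨by rw [Q.rank_of_isUnit hQu, Fintype.card_fin], hunit⟩
end

section
/- Let Φ ∈ ℝ^{M×N} have full row rank M, and let Σ_i, Σ_j be real symmetric positive semidefinite N×N matrices. Then 2·rank(Φ(Σ_i+Σ_j)Φᵀ) − rank(ΦΣ_iΦᵀ) − rank(ΦΣ_jΦᵀ) = dim( Im(Φᵀ) ∩ Null(Σ_i) ) + dim( Im(Φᵀ) ∩ Null(Σ_j) ) − 2·dim( Im(Φᵀ) ∩ Null(Σ_i) ∩ Null(Σ_j) ). (Identity (66) in Appendix C of the paper, obtained from Sylvester's rank theorem and the fact that Null(Σ_i+Σ_j) = Null(Σ_i) ∩ Null(Σ_j) for positive semidefinite matrices.) -/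
open Matrix Filter Topology
open scoped Classical
open scoped MatrixOrder

/-- Rank–nullity for a linear map restricted to a submodule. -/
lemma aux_finrank_map_add_inf_ker {K V W : Type*} [Field K] [AddCommGroup V] [Module K V]
    [AddCommGroup W] [Module K W] [FiniteDimensional K V]
    (f : V →ₗ[K] W) (R : Submodule K V) :
    Module.finrank K ↥(R.map f) + Module.finrank K ↥(R ⊓ LinearMap.ker f) =
      Module.finrank K ↥R := by
  have h := LinearMap.finrank_range_add_finrank_ker (f.domRestrict R)
  rw [LinearMap.range_domRestrict, LinearMap.ker_domRestrict] at h
  rw [← h]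
  congr 1
  rw [← Submodule.finrank_map_subtype_eq R ((LinearMap.ker f).comap R.subtype),
    Submodule.map_comap_subtype]

/-- The kernel of a PSD matrix equals the kernel of its square root. -/
lemma aux_ker_sqrt {n : ℕ} {A : Matrix (Fin n) (Fin n) ℝ} (hA : A.PosSemidef) :
    LinearMap.ker (CFC.sqrt A).mulVecLin = LinearMap.ker A.mulVecLin := by
  have hH : (CFC.sqrt A)ᵀ = (CFC.sqrt A) := by
    have := (CFC.sqrt_nonneg A).posSemidef.1
    simpa [Matrix.IsHermitian, Matrix.conjTranspose_eq_transpose_of_trivial] using this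
  have : A = (CFC.sqrt A)ᵀ * (CFC.sqrt A) := by rw [hH, CFC.sqrt_mul_sqrt_self A hA.nonneg]
  conv_rhs => rw [this]
  rw [Matrix.ker_mulVecLin_transpose_mul_self]

/-- Key lemma: for full-row-rank `Φ` and PSD `A`,
`rank(Φ A Φᵀ) + dim(Im Φᵀ ∩ Null A) = M`. -/
lemma aux_rank_add {M N : ℕ} (Φ : Matrix (Fin M) (Fin N) ℝ) (hΦ : Φ.rank = M)
    (A : Matrix (Fin N) (Fin N) ℝ) (hA : A.PosSemidef) :
    (Φ * A * Φᵀ).rank +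
      Module.finrank ℝ ↥(LinearMap.range Φᵀ.mulVecLin ⊓ LinearMap.ker A.mulVecLin) = M := by
  set B := (CFC.sqrt A) with hB
  have hH : Bᵀ = B := by
    have := (CFC.sqrt_nonneg A).posSemidef.1
    simpa [Matrix.IsHermitian, Matrix.conjTranspose_eq_transpose_of_trivial] using this
  have hfac : Φ * A * Φᵀ = (B * Φᵀ)ᵀ * (B * Φᵀ) := by
    rw [Matrix.transpose_mul, Matrix.transpose_transpose, hH, ← CFC.sqrt_mul_sqrt_self A hA.nonneg, ← hB]
    simp [Matrix.mul_assoc]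
  have hrank : (Φ * A * Φᵀ).rank = (B * Φᵀ).rank := by
    rw [hfac, Matrix.rank_transpose_mul_self]
  have hrk2 : (B * Φᵀ).rank =
      Module.finrank ℝ ↥((LinearMap.range Φᵀ.mulVecLin).map B.mulVecLin) := by
    rw [Matrix.rank, Matrix.mulVecLin_mul, LinearMap.range_comp]
  have hker : LinearMap.ker B.mulVecLin = LinearMap.ker A.mulVecLin := aux_ker_sqrt hA
  have hRN := aux_finrank_map_add_inf_ker B.mulVecLin (LinearMap.range Φᵀ.mulVecLin)
  rw [hker] at hRN
  have hdim : Module.finrank ℝ ↥(LinearMap.range Φᵀ.mulVecLin) = M := by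
    have : Φᵀ.rank = M := by rw [Matrix.rank_transpose, hΦ]
    simpa [Matrix.rank] using this
  rw [hrank, hrk2, hRN, hdim]

/-- Kernel of a sum of PSD matrices is the intersection of the kernels. -/
lemma aux_ker_sum {n : ℕ} {A B : Matrix (Fin n) (Fin n) ℝ}
    (hA : A.PosSemidef) (hB : B.PosSemidef) :
    LinearMap.ker (A + B).mulVecLin =
      LinearMap.ker A.mulVecLin ⊓ LinearMap.ker B.mulVecLin := by
  ext x
  simp only [LinearMap.mem_ker, Submodule.mem_inf, Matrix.mulVecLin_apply]
  constructor
  · intro h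
    have hsum : x ⬝ᵥ A *ᵥ x + x ⬝ᵥ B *ᵥ x = 0 := by
      have := congr_arg (fun v => x ⬝ᵥ v) h
      simpa [Matrix.add_mulVec, dotProduct_add] using this
    have hA' : (0:ℝ) ≤ x ⬝ᵥ A *ᵥ x := by simpa using hA.dotProduct_mulVec_nonneg x
    have hB' : (0:ℝ) ≤ x ⬝ᵥ B *ᵥ x := by simpa using hB.dotProduct_mulVec_nonneg x
    have h1 : x ⬝ᵥ A *ᵥ x = 0 := by linarith
    have h2 : x ⬝ᵥ B *ᵥ x = 0 := by linarith
    constructor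
    · have := hA.dotProduct_mulVec_zero_iff x
      simpa [h1] using this.mp (by simpa using h1)
    · have := hB.dotProduct_mulVec_zero_iff x
      simpa [h2] using this.mp (by simpa using h2)
  · rintro ⟨h1, h2⟩
    rw [Matrix.add_mulVec, h1, h2, add_zero]

/-- identity (66), Appendix C of the paper. For `Φ` of full row rank
`M` and PSD `Σ_i, Σ_j`:
`2 r_{ij} − r_i − r_j = dim(Im Φᵀ ∩ Null Σ_i) + dim(Im Φᵀ ∩ Null Σ_j)
 − 2 dim(Im Φᵀ ∩ Null Σ_i ∩ Null Σ_j)`. -/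
theorem stmt14 {M N : ℕ} (Φ : Matrix (Fin M) (Fin N) ℝ) (hΦ : Φ.rank = M)
    (Si Sj : Matrix (Fin N) (Fin N) ℝ) (hi : Si.PosSemidef) (hj : Sj.PosSemidef) :
    2 * ((Φ * (Si + Sj) * Φᵀ).rank : ℤ) - ((Φ * Si * Φᵀ).rank : ℤ) -
        ((Φ * Sj * Φᵀ).rank : ℤ) =
      (Module.finrank ℝ
          ↥(LinearMap.range Φᵀ.mulVecLin ⊓ LinearMap.ker Si.mulVecLin) : ℤ) +
        (Module.finrank ℝ
          ↥(LinearMap.range Φᵀ.mulVecLin ⊓ LinearMap.ker Sj.mulVecLin) : ℤ) -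
        2 * (Module.finrank ℝ
          ↥(LinearMap.range Φᵀ.mulVecLin ⊓ LinearMap.ker Si.mulVecLin ⊓
              LinearMap.ker Sj.mulVecLin) : ℤ) := by
  have hi' := aux_rank_add Φ hΦ Si hi
  have hj' := aux_rank_add Φ hΦ Sj hj
  have hij := aux_rank_add Φ hΦ (Si + Sj) (hi.add hj)
  rw [aux_ker_sum hi hj, ← inf_assoc] at hij
  omega
end
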